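/- arXiv:1806.03667 — 8 statements merged into one kernel-verified Lean document; each statement's English description precedes it below -/
import Mathlib

section
/- Let (X̃, ρ̃) and (X, ρ) be compact geodesic metric spaces, let T > 0, and let α ∈ (0,1). If the Gromov–Hausdorff distance satisfies d_GH(X̃, X) ≤ ε for some ε ∈ (0, α²), then the existence of (X̃, ρ̃, α, T)-winning strategies implies the existence of (X, ρ, α + (20T + 8)√ε, T)-winning strategies. -/
set_option linter.unusedSectionVars false
set_option maxHeartbeats 1000000

/-- A metric space is geodesic if every two points are joined by a geodesic path. -/
def IsGeodesicSpace (X : Type*) [MetricSpace X] : Prop :=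
  ∀ x y : X, ∃ l : ℝ, 0 ≤ l ∧ ∃ g : ℝ → X, g 0 = x ∧ g l = y ∧
    ∀ t ∈ Set.Icc (0 : ℝ) l, ∀ t' ∈ Set.Icc (0 : ℝ) l, dist (g t) (g t') = |t - t'|

/-- `1Lip(X)`: the set of 1-Lipschitz curves from `ℝ₊ = [0, ∞)` to `X`. -/
def OneLip (X : Type*) [MetricSpace X] : Set (ℝ → X) :=
  {c | LipschitzOnWith 1 c (Set.Ici (0 : ℝ))}

/-- A non-anticipative strategy with initial position `L0`. -/
def IsNonanticipativeStrategy {X : Type*} [MetricSpace X] (L0 : X)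
    (s : (ℝ → X) → (ℝ → X)) : Prop :=
  (∀ M ∈ OneLip X, s M ∈ OneLip X) ∧
  (∀ M ∈ OneLip X, s M 0 = L0) ∧
  (∀ M1 ∈ OneLip X, ∀ M2 ∈ OneLip X, ∀ τ : ℝ, 0 ≤ τ →
    (∀ t ∈ Set.Icc (0 : ℝ) τ, M1 t = M2 t) →
    ∀ t ∈ Set.Icc (0 : ℝ) τ, s M1 t = s M2 t)

/-- There are `(X, ρ, α, T)`-winning strategies. -/
def HasWinningStrategies (X : Type*) [MetricSpace X] (α T : ℝ) : Prop :=
  ∀ L0 : X, ∃ s : (ℝ → X) → (ℝ → X), IsNonanticipativeStrategy L0 s ∧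
    ∀ M ∈ OneLip X,
      sInf ((fun t => dist (M t) (s M t)) '' Set.Icc (0 : ℝ) T) ≤ α

namespace CaptureTransfer

open Set Metric ENNReal

section Chase

variable {Y : Type*} [MetricSpace Y] (Γ : Y → Y → ℝ → Y) (h : ℝ)

def chaseP (p0 : Y) (tgt : ℕ → Y) : ℕ → Y
  | 0 => p0
  | k + 1 => Γ (chaseP p0 tgt k) (tgt k) h

noncomputable def chase (p0 : Y) (tgt : ℕ → Y) (t : ℝ) : Y :=
  Γ (chaseP Γ h p0 tgt (⌊t / h⌋).toNat) (tgt (⌊t / h⌋).toNat) (t - (⌊t / h⌋).toNat * h)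

variable {Γ h}
variable (hΓlip : ∀ a b, LipschitzWith 1 (Γ a b))
    (hΓ0 : ∀ a b (t : ℝ), t ≤ 0 → Γ a b t = a)
    (hΓd : ∀ a b (t : ℝ), 0 ≤ t → dist (Γ a b t) b = max (dist a b - t) 0)
    (hh : 0 < h)

include hΓlip in
lemma gamma_dist (a b : Y) (s t : ℝ) : dist (Γ a b s) (Γ a b t) ≤ |s - t| := by
  simpa [Real.dist_eq] using (hΓlip a b).dist_le_mul s t

include hh in
lemma toNat_floor_mul_le (t : ℝ) (ht : 0 ≤ t) : ((⌊t / h⌋).toNat : ℝ) * h ≤ t := by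
  have h1 : (0 : ℤ) ≤ ⌊t / h⌋ := Int.floor_nonneg.2 (div_nonneg ht hh.le)
  have h2 : ((⌊t / h⌋).toNat : ℝ) = ((⌊t / h⌋ : ℤ) : ℝ) := by exact_mod_cast Int.toNat_of_nonneg h1
  rw [h2, ← le_div_iff₀ hh]
  exact Int.floor_le _

include hh in
lemma lt_toNat_floor_succ (t : ℝ) : t < (((⌊t / h⌋).toNat : ℝ) + 1) * h := by
  have h1 : (((⌊t / h⌋ : ℤ) : ℝ)) ≤ ((⌊t / h⌋).toNat : ℝ) := by exact_mod_cast Int.self_le_toNat _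
  have h2 : t / h < ((⌊t / h⌋).toNat : ℝ) + 1 := lt_of_lt_of_le (Int.lt_floor_add_one _)
    (by linarith)
  exact (div_lt_iff₀ hh).1 h2

include hh in
lemma toNat_floor_eq (k : ℕ) (s : ℝ) (h1 : (k : ℝ) * h ≤ s) (h2 : s < ((k : ℝ) + 1) * h) :
    (⌊s / h⌋).toNat = k := by
  have : ⌊s / h⌋ = (k : ℤ) := by
    rw [Int.floor_eq_iff]
    constructor
    · rw [le_div_iff₀ hh]; exact_mod_cast h1
    · rw [div_lt_iff₀ hh]; push_cast; exact h2
  rw [this]; simp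

include hh in
lemma toNat_floor_nonpos (t : ℝ) (ht : t ≤ 0) : (⌊t / h⌋).toNat = 0 :=
  Int.toNat_of_nonpos (Int.floor_nonpos (div_nonpos_of_nonpos_of_nonneg ht hh.le))

include hΓ0 hh in
lemma chase_nonpos (p0 : Y) (tgt : ℕ → Y) (t : ℝ) (ht : t ≤ 0) :
    chase Γ h p0 tgt t = p0 := by
  unfold chase
  rw [toNat_floor_nonpos hh t ht]
  simpa [chaseP] using hΓ0 _ _ _ (by simpa using ht)

include hΓ0 hh in
lemma chase_at_mul (p0 : Y) (tgt : ℕ → Y) (k : ℕ) :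
    chase Γ h p0 tgt ((k : ℝ) * h) = chaseP Γ h p0 tgt k := by
  unfold chase
  have hk : (⌊((k : ℝ) * h) / h⌋).toNat = k :=
    toNat_floor_eq hh k _ le_rfl (by nlinarith)
  rw [hk]
  exact hΓ0 _ _ _ (by simp)

include hΓlip hΓ0 hh in
lemma chase_dist_chaseP (p0 : Y) (tgt : ℕ → Y) :
    ∀ (k : ℕ) (s : ℝ), s ≤ (k : ℝ) * h →
      dist (chase Γ h p0 tgt s) (chaseP Γ h p0 tgt k) ≤ (k : ℝ) * h - s := by
  intro k
  induction k with
  | zero =>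
    intro s hs
    simp only [Nat.cast_zero, zero_mul] at hs ⊢
    rw [chase_nonpos hΓ0 hh p0 tgt s hs]
    simp [chaseP, hs]
  | succ k ih =>
    intro s hs
    push_cast at hs ⊢
    rcases le_or_gt s ((k : ℝ) * h) with hs' | hs'
    · have h1 := ih s hs'
      have h2 : dist (chaseP Γ h p0 tgt k) (chaseP Γ h p0 tgt (k + 1)) ≤ h := by
        have e : chaseP Γ h p0 tgt k = Γ (chaseP Γ h p0 tgt k) (tgt k) 0 :=
          (hΓ0 _ _ _ le_rfl).symm
        calc dist (chaseP Γ h p0 tgt k) (chaseP Γ h p0 tgt (k + 1))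
            = dist (Γ (chaseP Γ h p0 tgt k) (tgt k) 0) (Γ (chaseP Γ h p0 tgt k) (tgt k) h) := by
              rw [← e]; rfl
          _ ≤ |0 - h| := gamma_dist hΓlip _ _ _ _
          _ = h := by rw [abs_of_nonpos (by linarith)]; ring
      calc dist (chase Γ h p0 tgt s) (chaseP Γ h p0 tgt (k + 1))
          ≤ dist (chase Γ h p0 tgt s) (chaseP Γ h p0 tgt k)
              + dist (chaseP Γ h p0 tgt k) (chaseP Γ h p0 tgt (k + 1)) := dist_triangle _ _ _
        _ ≤ ((k : ℝ) * h - s) + h := add_le_add h1 h2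
        _ = ((k : ℝ) + 1) * h - s := by ring
    · rcases eq_or_lt_of_le hs with he | hlt
      · rw [show s = ((k + 1 : ℕ) : ℝ) * h by push_cast; linarith,
          chase_at_mul hΓ0 hh]
        simp
      · have hk : (⌊s / h⌋).toNat = k := toNat_floor_eq hh k s hs'.le (by push_cast; linarith)
        have : chase Γ h p0 tgt s = Γ (chaseP Γ h p0 tgt k) (tgt k) (s - (k : ℝ) * h) := by
          unfold chase; rw [hk]
        rw [this, show chaseP Γ h p0 tgt (k + 1) = Γ (chaseP Γ h p0 tgt k) (tgt k) h from rfl]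
        calc dist _ _ ≤ |(s - (k : ℝ) * h) - h| := gamma_dist hΓlip _ _ _ _
          _ = ((k : ℝ) + 1) * h - s := by rw [abs_of_nonpos (by linarith)]; ring

include hΓlip hΓ0 hh in
lemma chase_lip (p0 : Y) (tgt : ℕ → Y) : LipschitzWith 1 (chase Γ h p0 tgt) := by
  apply LipschitzWith.of_dist_le_mul
  have key : ∀ s t : ℝ, s ≤ t → dist (chase Γ h p0 tgt s) (chase Γ h p0 tgt t) ≤ t - s := by
    intro s t hst
    rcases le_or_gt t 0 with ht | ht
    · rw [chase_nonpos hΓ0 hh p0 tgt t ht, chase_nonpos hΓ0 hh p0 tgt s (hst.trans ht)]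
      simpa using by linarith
    · set k := (⌊t / h⌋).toNat with hkdef
      have hk1 : (k : ℝ) * h ≤ t := toNat_floor_mul_le hh t ht.le
      have hk2 : t < ((k : ℝ) + 1) * h := lt_toNat_floor_succ hh t
      rcases le_or_gt ((k : ℝ) * h) s with hs | hs
      · have hks : (⌊s / h⌋).toNat = k := toNat_floor_eq hh k s hs (lt_of_le_of_lt hst hk2)
        have e1 : chase Γ h p0 tgt s = Γ (chaseP Γ h p0 tgt k) (tgt k) (s - (k : ℝ) * h) := by
          unfold chase; rw [hks]
        have e2 : chase Γ h p0 tgt t = Γ (chaseP Γ h p0 tgt k) (tgt k) (t - (k : ℝ) * h) := by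
          unfold chase; rw [← hkdef]
        rw [e1, e2]
        calc dist _ _ ≤ |(s - (k : ℝ) * h) - (t - (k : ℝ) * h)| := gamma_dist hΓlip _ _ _ _
          _ = t - s := by rw [show (s - (k:ℝ)*h) - (t - (k:ℝ)*h) = s - t by ring,
              abs_of_nonpos (by linarith)]; ring
      · have h1 : dist (chase Γ h p0 tgt s) (chaseP Γ h p0 tgt k) ≤ (k : ℝ) * h - s :=
          chase_dist_chaseP hΓlip hΓ0 hh p0 tgt k s hs.le
        have h2 : dist (chaseP Γ h p0 tgt k) (chase Γ h p0 tgt t) ≤ t - (k : ℝ) * h := by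
          have e2 : chase Γ h p0 tgt t = Γ (chaseP Γ h p0 tgt k) (tgt k) (t - (k : ℝ) * h) := by
            unfold chase; rw [← hkdef]
          have e3 : chaseP Γ h p0 tgt k = Γ (chaseP Γ h p0 tgt k) (tgt k) 0 :=
            (hΓ0 _ _ _ le_rfl).symm
          rw [e2]
          calc dist (chaseP Γ h p0 tgt k) _
              = dist (Γ (chaseP Γ h p0 tgt k) (tgt k) 0) _ := by rw [← e3]
            _ ≤ |0 - (t - (k : ℝ) * h)| := gamma_dist hΓlip _ _ _ _
            _ = t - (k : ℝ) * h := by rw [abs_of_nonpos (by linarith)]; ring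
        calc dist (chase Γ h p0 tgt s) (chase Γ h p0 tgt t)
            ≤ dist (chase Γ h p0 tgt s) (chaseP Γ h p0 tgt k)
              + dist (chaseP Γ h p0 tgt k) (chase Γ h p0 tgt t) := dist_triangle _ _ _
          _ ≤ ((k : ℝ) * h - s) + (t - (k : ℝ) * h) := add_le_add h1 h2
          _ = t - s := by ring
  intro x y
  rcases le_total x y with hxy | hxy
  · calc dist (chase Γ h p0 tgt x) (chase Γ h p0 tgt y) ≤ y - x := key x y hxy
      _ ≤ 1 * dist x y := by rw [Real.dist_eq, abs_of_nonpos (by linarith)]; linarith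
  · rw [dist_comm]
    calc dist (chase Γ h p0 tgt y) (chase Γ h p0 tgt x) ≤ x - y := key y x hxy
      _ ≤ 1 * dist x y := by rw [Real.dist_eq, abs_of_nonneg (by linarith)]; linarith

include hΓ0 hΓd hh in
lemma chaseP_dist_tgt (p0 : Y) (tgt : ℕ → Y) (c : ℝ) (hc : 0 ≤ c) (hp0 : p0 = tgt 0)
    (htgt : ∀ k, dist (tgt k) (tgt (k + 1)) ≤ h + c) :
    ∀ k, dist (chaseP Γ h p0 tgt k) (tgt k) ≤ h + c * k := by
  intro k
  induction k with
  | zero => simp [chaseP, hp0, hh.le]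
  | succ k ih =>
    have h1 : dist (chaseP Γ h p0 tgt (k + 1)) (tgt k)
        = max (dist (chaseP Γ h p0 tgt k) (tgt k) - h) 0 := by
      rw [show chaseP Γ h p0 tgt (k + 1) = Γ (chaseP Γ h p0 tgt k) (tgt k) h from rfl]
      exact hΓd _ _ _ hh.le
    have h2 : dist (chaseP Γ h p0 tgt (k + 1)) (tgt k) ≤ c * k := by
      rw [h1]
      apply max_le (by linarith) (by positivity)
    calc dist (chaseP Γ h p0 tgt (k + 1)) (tgt (k + 1))
        ≤ dist (chaseP Γ h p0 tgt (k + 1)) (tgt k) + dist (tgt k) (tgt (k + 1)) :=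
          dist_triangle _ _ _
      _ ≤ c * k + (h + c) := add_le_add h2 (htgt k)
      _ = h + c * (k + 1) := by ring
      _ = h + c * ((k + 1 : ℕ) : ℝ) := by push_cast; ring

include hΓlip hΓ0 hΓd hh in
lemma chase_key (p0 : Y) (tgt : ℕ → Y) (c : ℝ) (hc : 0 ≤ c) (hp0 : p0 = tgt 0)
    (htgt : ∀ k, dist (tgt k) (tgt (k + 1)) ≤ h + c) (t : ℝ) (ht : 0 ≤ t) :
    dist (chase Γ h p0 tgt t) (tgt (⌊t / h⌋).toNat) + (t - ((⌊t / h⌋).toNat : ℝ) * h)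
      ≤ h + c * (⌊t / h⌋).toNat := by
  set k := (⌊t / h⌋).toNat with hkdef
  have hk1 : (k : ℝ) * h ≤ t := toNat_floor_mul_le hh t ht
  have hk2 : t < ((k : ℝ) + 1) * h := lt_toNat_floor_succ hh t
  have hlk : dist (chaseP Γ h p0 tgt k) (tgt k) ≤ h + c * k :=
    chaseP_dist_tgt hΓ0 hΓd hh p0 tgt c hc hp0 htgt k
  have e : chase Γ h p0 tgt t = Γ (chaseP Γ h p0 tgt k) (tgt k) (t - (k : ℝ) * h) := by
    unfold chase; rw [← hkdef]
  rw [e, hΓd _ _ _ (by linarith)]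
  rcases le_or_gt (dist (chaseP Γ h p0 tgt k) (tgt k) - (t - (k : ℝ) * h)) 0 with hd | hd
  · rw [max_eq_right hd]
    have : 0 ≤ c * k := by positivity
    linarith
  · rw [max_eq_left hd.le]
    linarith

lemma chaseP_congr (p0 : Y) (tgt1 tgt2 : ℕ → Y) (K : ℕ) (hj : ∀ j ≤ K, tgt1 j = tgt2 j) :
    ∀ k ≤ K + 1, chaseP Γ h p0 tgt1 k = chaseP Γ h p0 tgt2 k := by
  intro k
  induction k with
  | zero => intro _; rfl
  | succ k ih =>
    intro hk
    have hkK : k ≤ K := Nat.lt_succ_iff.mp hk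
    show Γ (chaseP Γ h p0 tgt1 k) (tgt1 k) h = Γ (chaseP Γ h p0 tgt2 k) (tgt2 k) h
    rw [ih (le_trans hkK (Nat.le_succ K)), hj k hkK]

include hh in
lemma chase_congr (p0 : Y) (tgt1 tgt2 : ℕ → Y) (K : ℕ) (hj : ∀ j ≤ K, tgt1 j = tgt2 j)
    (t : ℝ) (ht : t < ((K : ℝ) + 1) * h) :
    chase Γ h p0 tgt1 t = chase Γ h p0 tgt2 t := by
  have hkK : (⌊t / h⌋).toNat ≤ K := by
    rcases le_or_gt t 0 with ht0 | ht0
    · rw [toNat_floor_nonpos hh t ht0]; exact Nat.zero_le K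
    · by_contra hcon
      push_neg at hcon
      have h1 : ((K : ℝ) + 1) * h ≤ ((⌊t / h⌋).toNat : ℝ) * h := by
        have : (K : ℝ) + 1 ≤ ((⌊t / h⌋).toNat : ℝ) := by exact_mod_cast hcon
        nlinarith
      have h2 : ((⌊t / h⌋).toNat : ℝ) * h ≤ t := toNat_floor_mul_le hh t ht0.le
      linarith
  unfold chase
  rw [chaseP_congr p0 tgt1 tgt2 K hj _ (le_trans hkK (Nat.le_succ K)), hj _ hkK]

end Chase

lemma exists_geodesic_interp {Y : Type*} [MetricSpace Y] (hGeo : IsGeodesicSpace Y) :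
    ∃ Γ : Y → Y → ℝ → Y, (∀ a b, LipschitzWith 1 (Γ a b)) ∧
      (∀ a b (t : ℝ), t ≤ 0 → Γ a b t = a) ∧
      (∀ a b (t : ℝ), 0 ≤ t → dist (Γ a b t) b = max (dist a b - t) 0) := by
  have H : ∀ a b : Y, ∃ γ : ℝ → Y, LipschitzWith 1 γ ∧ (∀ t : ℝ, t ≤ 0 → γ t = a) ∧
      (∀ t : ℝ, 0 ≤ t → dist (γ t) b = max (dist a b - t) 0) := by
    intro a b
    obtain ⟨l, hl, g, hg0, hgl, hiso⟩ := hGeo a b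
    have hlab : dist a b = l := by
      rw [← hg0, ← hgl, hiso 0 ⟨le_rfl, hl⟩ l ⟨hl, le_rfl⟩]
      rw [abs_of_nonpos (by linarith)]
      ring
    have hmem : ∀ t : ℝ, max 0 (min t l) ∈ Icc (0 : ℝ) l :=
      fun t => ⟨le_max_left _ _, max_le hl (min_le_right _ _)⟩
    refine ⟨fun t => g (max 0 (min t l)), ?_, ?_, ?_⟩
    · apply LipschitzWith.of_dist_le_mul
      intro s t
      have hclip : LipschitzWith 1 (fun t : ℝ => max 0 (min t l)) :=
        (LipschitzWith.id.min_const l).const_max 0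
      have h1 : dist (max 0 (min s l)) (max 0 (min t l)) ≤ 1 * dist s t := hclip.dist_le_mul s t
      calc dist (g (max 0 (min s l))) (g (max 0 (min t l)))
          = |max 0 (min s l) - max 0 (min t l)| := hiso _ (hmem s) _ (hmem t)
        _ ≤ 1 * dist s t := by rw [← Real.dist_eq]; exact h1
    · intro t ht
      have : max 0 (min t l) = 0 := max_eq_left (le_trans (min_le_left _ _) ht)
      simp only [this, hg0]
    · intro t ht
      have hmm : max 0 (min t l) = min t l := max_eq_right (le_min ht hl)
      have : dist (g (max 0 (min t l))) b = |min t l - l| := by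
        rw [hmm, ← hgl]
        exact hiso _ ⟨le_min ht hl, min_le_right _ _⟩ l ⟨hl, le_rfl⟩
      rw [this, abs_of_nonpos (by simp [min_le_right]), hlab]
      rw [neg_sub]
      rcases le_total t l with htl | htl
      · rw [min_eq_left htl, max_eq_left (by linarith)]
      · rw [min_eq_right htl, sub_self, max_eq_right (by linarith)]
  choose Γ h1 h2 h3 using H
  exact ⟨Γ, h1, fun a b => h2 a b, fun a b => h3 a b⟩

lemma exists_approx_maps (Xt X : Type*) [MetricSpace Xt] [CompactSpace Xt] [Nonempty Xt]
    [MetricSpace X] [CompactSpace X] [Nonempty X] (ε : ℝ)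
    (hGH : GromovHausdorff.ghDist Xt X ≤ ε) :
    ∃ (Φ : Xt → lp (fun _ : ℕ => ℝ) ∞) (Ψ : X → lp (fun _ : ℕ => ℝ) ∞),
      Isometry Φ ∧ Isometry Ψ ∧
      (∃ f : X → Xt, ∀ x, dist (Ψ x) (Φ (f x)) ≤ ε) ∧
      (∃ g : Xt → X, ∀ a, dist (Φ a) (Ψ (g a)) ≤ ε) := by
  obtain ⟨Φ, Ψ, hΦ, hΨ, hD⟩ := GromovHausdorff.ghDist_eq_hausdorffDist Xt X
  have hHd : hausdorffDist (range Φ) (range Ψ) ≤ ε := by rw [← hD]; exact hGH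
  have hΦc : IsCompact (range Φ) := isCompact_range hΦ.continuous
  have hΨc : IsCompact (range Ψ) := isCompact_range hΨ.continuous
  have hne : EMetric.hausdorffEdist (range Φ) (range Ψ) ≠ ⊤ :=
    hausdorffEdist_ne_top_of_nonempty_of_bounded (range_nonempty _) (range_nonempty _)
      hΦc.isBounded hΨc.isBounded
  refine ⟨Φ, Ψ, hΦ, hΨ, ?_, ?_⟩
  · have h : ∀ x : X, ∃ a : Xt, dist (Ψ x) (Φ a) ≤ ε := by
      intro x
      obtain ⟨y, hy, hyd⟩ := hΦc.exists_infDist_eq_dist (range_nonempty _) (Ψ x)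
      obtain ⟨a, rfl⟩ := hy
      refine ⟨a, ?_⟩
      rw [← hyd]
      calc infDist (Ψ x) (range Φ) ≤ hausdorffDist (range Ψ) (range Φ) :=
            infDist_le_hausdorffDist_of_mem (mem_range_self x)
              (by rwa [EMetric.hausdorffEdist_comm])
        _ = hausdorffDist (range Φ) (range Ψ) := hausdorffDist_comm
        _ ≤ ε := hHd
    choose f hf using h
    exact ⟨f, hf⟩
  · have h : ∀ a : Xt, ∃ x : X, dist (Φ a) (Ψ x) ≤ ε := by
      intro a
      obtain ⟨y, hy, hyd⟩ := hΨc.exists_infDist_eq_dist (range_nonempty _) (Φ a)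
      obtain ⟨x, rfl⟩ := hy
      refine ⟨x, ?_⟩
      rw [← hyd]
      calc infDist (Φ a) (range Ψ) ≤ hausdorffDist (range Φ) (range Ψ) :=
            infDist_le_hausdorffDist_of_mem (mem_range_self a) hne
        _ ≤ ε := hHd
    choose g hg using h
    exact ⟨g, hg⟩

end CaptureTransfer

open Set Metric CaptureTransfer

/-- If `d_GH(X̃, X) ≤ ε ∈ (0, α²)`, existence of `(X̃, ρ̃, α, T)`-winning
strategies implies existence of `(X, ρ, α + (20T + 8)√ε, T)`-winning strategies. -/
theorem capture_transfer
    (Xt X : Type*) [MetricSpace Xt] [CompactSpace Xt] [Nonempty Xt]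
    [MetricSpace X] [CompactSpace X] [Nonempty X]
    (hXtGeo : IsGeodesicSpace Xt) (hXGeo : IsGeodesicSpace X)
    (T α ε : ℝ) (hT : 0 < T) (hα : α ∈ Set.Ioo (0 : ℝ) 1)
    (hε : ε ∈ Set.Ioo (0 : ℝ) (α ^ 2))
    (hGH : GromovHausdorff.ghDist Xt X ≤ ε)
    (hwin : HasWinningStrategies Xt α T) :
    HasWinningStrategies X (α + (20 * T + 8) * Real.sqrt ε) T := by
  obtain ⟨hα0, hα1⟩ := hα
  obtain ⟨hε0, hεα⟩ := hε
  have hε1 : ε < 1 := lt_trans hεα (by nlinarith)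
  set h := Real.sqrt ε with hhdef
  have hh : 0 < h := Real.sqrt_pos.2 hε0
  have hh2 : h * h = ε := Real.mul_self_sqrt hε0.le
  have hh1 : h ≤ 1 := by
    rw [hhdef, show (1 : ℝ) = Real.sqrt 1 by simp]
    exact Real.sqrt_le_sqrt hε1.le
  obtain ⟨Φ, Ψ, hΦ, hΨ, ⟨f, hf⟩, ⟨g, hg⟩⟩ := exists_approx_maps Xt X ε hGH
  obtain ⟨Γt, hΓtlip, hΓt0, hΓtd⟩ := exists_geodesic_interp hXtGeo
  obtain ⟨ΓX, hΓXlip, hΓX0, hΓXd⟩ := exists_geodesic_interp hXGeo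
  intro L0
  obtain ⟨st, ⟨hstL, hst0, hstNA⟩, hstWin⟩ := hwin (f L0)
  -- the simulated evader curve in Xt
  set tgtF : (ℝ → X) → ℕ → Xt := fun M k => f (M ((k : ℝ) * h)) with htgtFdef
  set MtC : (ℝ → X) → ℝ → Xt := fun M => chase Γt h (tgtF M 0) (tgtF M) with hMtCdef
  set LtC : (ℝ → X) → ℝ → Xt := fun M => st (MtC M) with hLtCdef
  set tgtB : (ℝ → X) → ℕ → X :=
    fun M k => if k = 0 then L0 else g (LtC M ((k : ℝ) * h)) with htgtBdef
  set sX : (ℝ → X) → ℝ → X := fun M => chase ΓX h (tgtB M 0) (tgtB M) with hsXdef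
  have htgtB0 : ∀ M, tgtB M 0 = L0 := fun M => rfl
  have hMtOne : ∀ M, MtC M ∈ OneLip Xt := by
    intro M
    exact (chase_lip hΓtlip hΓt0 hh (tgtF M 0) (tgtF M)).lipschitzOnWith (s := Set.Ici (0 : ℝ))
  have hsOne : ∀ M, sX M ∈ OneLip X := by
    intro M
    exact (chase_lip hΓXlip hΓX0 hh (tgtB M 0) (tgtB M)).lipschitzOnWith (s := Set.Ici (0 : ℝ))
  have hLtOne : ∀ M, LtC M ∈ OneLip Xt := fun M => hstL _ (hMtOne M)
  have hLt0 : ∀ M, LtC M 0 = f L0 := fun M => hst0 _ (hMtOne M)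
  refine ⟨sX, ⟨fun M _ => hsOne M, ?_, ?_⟩, ?_⟩
  · intro M _
    rw [hsXdef]
    simp only
    rw [chase_nonpos hΓX0 hh _ _ 0 le_rfl]
    exact htgtB0 M
  · -- non-anticipativity
    intro M1 _ M2 _ τ hτ hag t ht
    set K := (⌊τ / h⌋).toNat with hK
    have hKτ : (K : ℝ) * h ≤ τ := toNat_floor_mul_le hh τ hτ
    have hτK : τ < ((K : ℝ) + 1) * h := lt_toNat_floor_succ hh τ
    have hjh : ∀ j : ℕ, j ≤ K → ((j : ℝ) * h) ∈ Icc (0 : ℝ) τ := by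
      intro j hj
      have hjK : (j : ℝ) ≤ (K : ℝ) := by exact_mod_cast hj
      exact ⟨by positivity, le_trans (mul_le_mul_of_nonneg_right hjK hh.le) hKτ⟩
    have htgtF12 : ∀ j ≤ K, tgtF M1 j = tgtF M2 j :=
      fun j hj => congrArg f (hag _ (hjh j hj))
    have hMt12 : ∀ u ∈ Icc (0 : ℝ) τ, MtC M1 u = MtC M2 u := by
      intro u hu
      have h0 : tgtF M1 0 = tgtF M2 0 := htgtF12 0 (Nat.zero_le K)
      calc MtC M1 u = chase Γt h (tgtF M1 0) (tgtF M2) u :=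
            chase_congr hh _ _ _ K htgtF12 u (lt_of_le_of_lt hu.2 hτK)
        _ = MtC M2 u := by rw [h0]
    have hLt12 : ∀ u ∈ Icc (0 : ℝ) τ, LtC M1 u = LtC M2 u :=
      hstNA _ (hMtOne M1) _ (hMtOne M2) τ hτ hMt12
    have htgtB12 : ∀ j ≤ K, tgtB M1 j = tgtB M2 j := by
      intro j hj
      rcases Nat.eq_zero_or_pos j with hj0 | hj0
      · rw [hj0, htgtB0 M1, htgtB0 M2]
      · have : j ≠ 0 := Nat.pos_iff_ne_zero.mp hj0
        simp only [htgtBdef, if_neg this]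
        rw [hLt12 _ (hjh j hj)]
    calc sX M1 t = chase ΓX h (tgtB M1 0) (tgtB M2) t :=
          chase_congr hh _ _ _ K htgtB12 t (lt_of_le_of_lt ht.2 hτK)
      _ = sX M2 t := by rw [htgtB0 M1, ← htgtB0 M2]
  · -- winning property
    intro M hM
    have hMd : ∀ u v : ℝ, 0 ≤ u → 0 ≤ v → dist (M u) (M v) ≤ |u - v| := by
      intro u v hu hv
      have hM' : LipschitzOnWith 1 M (Set.Ici (0 : ℝ)) := hM
      have := hM'.dist_le_mul u hu v hv
      simpa [Real.dist_eq] using this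
    have hLtd : ∀ u v : ℝ, 0 ≤ u → 0 ≤ v → dist (LtC M u) (LtC M v) ≤ |u - v| := by
      intro u v hu hv
      have hLt' : LipschitzOnWith 1 (LtC M) (Set.Ici (0 : ℝ)) := hLtOne M
      have := hLt'.dist_le_mul u hu v hv
      simpa [Real.dist_eq] using this
    -- extract the capture time in Xt
    have hwinM := hstWin (MtC M) (hMtOne M)
    have hMtcont : Continuous (MtC M) := (chase_lip hΓtlip hΓt0 hh _ _).continuous
    have hLt'' : LipschitzOnWith 1 (LtC M) (Set.Ici (0 : ℝ)) := hLtOne M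
    have hFcont : ContinuousOn (fun t => dist (MtC M t) (LtC M t)) (Icc (0 : ℝ) T) := by
      have hp : ContinuousOn (fun t => (MtC M t, LtC M t)) (Icc (0 : ℝ) T) :=
        (hMtcont.continuousOn).prodMk (hLt''.continuousOn.mono Icc_subset_Ici_self)
      exact continuous_dist.comp_continuousOn hp
    have hcs : IsCompact ((fun t => dist (MtC M t) (LtC M t)) '' Icc (0 : ℝ) T) :=
      isCompact_Icc.image_of_continuousOn hFcont
    have hne' : ((fun t => dist (MtC M t) (LtC M t)) '' Icc (0 : ℝ) T).Nonempty :=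
      (nonempty_Icc.2 hT.le).image _
    obtain ⟨tstar, hts, hteq⟩ := hcs.sInf_mem hne'
    have hdts : dist (MtC M tstar) (LtC M tstar) ≤ α := by
      rw [show dist (MtC M tstar) (LtC M tstar)
        = (fun t => dist (MtC M t) (LtC M t)) tstar from rfl, hteq]
      exact hwinM
    obtain ⟨hts0, htsT⟩ := hts
    set k := (⌊tstar / h⌋).toNat with hkdef
    have hk1 : (k : ℝ) * h ≤ tstar := toNat_floor_mul_le hh _ hts0
    have hk2 : tstar < ((k : ℝ) + 1) * h := lt_toNat_floor_succ hh _
    have hεk : ε * (k : ℝ) ≤ h * T := by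
      have h1 : (k : ℝ) * h ≤ T := le_trans hk1 htsT
      calc ε * (k : ℝ) = h * ((k : ℝ) * h) := by rw [← hh2]; ring
        _ ≤ h * T := by nlinarith
    -- forward comparison
    have htgtFstep : ∀ j : ℕ, dist (tgtF M j) (tgtF M (j + 1)) ≤ h + 2 * ε := by
      intro j
      have hx : dist (M ((j : ℝ) * h)) (M (((j : ℕ) + 1 : ℕ) * h)) ≤ h := by
        have hd := hMd ((j : ℝ) * h) (((j : ℝ) + 1) * h) (by positivity) (by positivity)
        have : |(j : ℝ) * h - ((j : ℝ) + 1) * h| = h := by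
          rw [show (j : ℝ) * h - ((j : ℝ) + 1) * h = -h by ring, abs_neg,
            abs_of_nonneg hh.le]
        rw [this] at hd
        convert hd using 3
        push_cast
        ring
      calc dist (tgtF M j) (tgtF M (j + 1))
          = dist (Φ (f (M ((j : ℝ) * h)))) (Φ (f (M (((j : ℕ) + 1 : ℕ) * h)))) :=
            (hΦ.dist_eq _ _).symm
        _ ≤ dist (Φ (f (M ((j : ℝ) * h)))) (Ψ (M ((j : ℝ) * h)))
            + dist (Ψ (M ((j : ℝ) * h))) (Ψ (M (((j : ℕ) + 1 : ℕ) * h)))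
            + dist (Ψ (M (((j : ℕ) + 1 : ℕ) * h))) (Φ (f (M (((j : ℕ) + 1 : ℕ) * h)))) :=
            dist_triangle4 _ _ _ _
        _ ≤ ε + h + ε := by
            have e1 : dist (Φ (f (M ((j : ℝ) * h)))) (Ψ (M ((j : ℝ) * h))) ≤ ε := by
              rw [dist_comm]; exact hf _
            have e2 : dist (Ψ (M ((j : ℝ) * h))) (Ψ (M (((j : ℕ) + 1 : ℕ) * h)))
                = dist (M ((j : ℝ) * h)) (M (((j : ℕ) + 1 : ℕ) * h)) := hΨ.dist_eq _ _
            have e3 := hf (M (((j : ℕ) + 1 : ℕ) * h))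
            rw [e2]
            linarith [hx]
        _ ≤ h + 2 * ε := by linarith
    have hkey_f := chase_key hΓtlip hΓt0 hΓtd hh (tgtF M 0) (tgtF M) (2 * ε)
      (by positivity) rfl htgtFstep tstar hts0
    rw [← hkdef] at hkey_f
    have hforward : dist (Φ (MtC M tstar)) (Ψ (M tstar)) ≤ h + 2 * ε * k + ε := by
      have h1 : dist (Φ (MtC M tstar)) (Φ (tgtF M k)) = dist (MtC M tstar) (tgtF M k) :=
        hΦ.dist_eq _ _
      have h2 : dist (Φ (tgtF M k)) (Ψ (M ((k : ℝ) * h))) ≤ ε := by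
        rw [dist_comm]; exact hf _
      have h3 : dist (Ψ (M ((k : ℝ) * h))) (Ψ (M tstar)) ≤ tstar - (k : ℝ) * h := by
        rw [hΨ.dist_eq]
        have := hMd ((k : ℝ) * h) tstar (by positivity) hts0
        rwa [abs_of_nonpos (by linarith), neg_sub] at this
      calc dist (Φ (MtC M tstar)) (Ψ (M tstar))
          ≤ dist (Φ (MtC M tstar)) (Φ (tgtF M k)) + dist (Φ (tgtF M k)) (Ψ (M ((k : ℝ) * h)))
            + dist (Ψ (M ((k : ℝ) * h))) (Ψ (M tstar)) := dist_triangle4 _ _ _ _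
        _ ≤ h + 2 * ε * k + ε := by rw [h1]; linarith [hkey_f]
    -- backward comparison
    have hLt0M : LtC M 0 = f L0 := hLt0 M
    have htgtBstep : ∀ j : ℕ, dist (tgtB M j) (tgtB M (j + 1)) ≤ h + 2 * ε := by
      intro j
      rcases Nat.eq_zero_or_pos j with hj0 | hj0
      · subst hj0
        have e0 : tgtB M 0 = L0 := rfl
        have e1 : tgtB M 1 = g (LtC M ((1 : ℕ) * h)) := rfl
        rw [show (0 : ℕ) + 1 = 1 from rfl, e0, e1]
        have hb : dist (LtC M 0) (LtC M (((1 : ℕ) : ℝ) * h)) ≤ h := by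
          have := hLtd 0 (((1 : ℕ) : ℝ) * h) le_rfl (by positivity)
          rw [abs_of_nonpos (by push_cast; nlinarith), neg_sub] at this
          push_cast at this ⊢
          linarith
        calc dist L0 (g (LtC M (((1 : ℕ) : ℝ) * h)))
            = dist (Ψ L0) (Ψ (g (LtC M (((1 : ℕ) : ℝ) * h)))) := (hΨ.dist_eq _ _).symm
          _ ≤ dist (Ψ L0) (Φ (f L0)) + dist (Φ (f L0)) (Φ (LtC M (((1 : ℕ) : ℝ) * h)))
              + dist (Φ (LtC M (((1 : ℕ) : ℝ) * h))) (Ψ (g (LtC M (((1 : ℕ) : ℝ) * h)))) :=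
              dist_triangle4 _ _ _ _
          _ ≤ ε + h + ε := by
              have e2 : dist (Φ (f L0)) (Φ (LtC M (((1 : ℕ) : ℝ) * h)))
                  = dist (LtC M 0) (LtC M (((1 : ℕ) : ℝ) * h)) := by
                rw [hΦ.dist_eq, hLt0M]
              have e3 := hg (LtC M (((1 : ℕ) : ℝ) * h))
              have e4 := hf L0
              rw [e2]
              linarith [hb]
          _ ≤ h + 2 * ε := by linarith
      · have hjne : j ≠ 0 := Nat.pos_iff_ne_zero.mp hj0
        have e0 : tgtB M j = g (LtC M ((j : ℝ) * h)) := by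
          simp only [htgtBdef, if_neg hjne]
        have e1 : tgtB M (j + 1) = g (LtC M (((j + 1 : ℕ) : ℝ) * h)) := by
          simp only [htgtBdef, if_neg (Nat.succ_ne_zero j)]
        rw [e0, e1]
        have hb : dist (LtC M ((j : ℝ) * h)) (LtC M (((j + 1 : ℕ) : ℝ) * h)) ≤ h := by
          have := hLtd ((j : ℝ) * h) (((j + 1 : ℕ) : ℝ) * h) (by positivity) (by positivity)
          rw [abs_of_nonpos (by push_cast; nlinarith), neg_sub] at this
          push_cast at this ⊢
          linarith
        calc dist (g (LtC M ((j : ℝ) * h))) (g (LtC M (((j + 1 : ℕ) : ℝ) * h)))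
            = dist (Ψ (g (LtC M ((j : ℝ) * h)))) (Ψ (g (LtC M (((j + 1 : ℕ) : ℝ) * h)))) :=
              (hΨ.dist_eq _ _).symm
          _ ≤ dist (Ψ (g (LtC M ((j : ℝ) * h)))) (Φ (LtC M ((j : ℝ) * h)))
              + dist (Φ (LtC M ((j : ℝ) * h))) (Φ (LtC M (((j + 1 : ℕ) : ℝ) * h)))
              + dist (Φ (LtC M (((j + 1 : ℕ) : ℝ) * h)))
                  (Ψ (g (LtC M (((j + 1 : ℕ) : ℝ) * h)))) := dist_triangle4 _ _ _ _
          _ ≤ ε + h + ε := by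
              have e2 := hg (LtC M ((j : ℝ) * h))
              have e3 := hg (LtC M (((j + 1 : ℕ) : ℝ) * h))
              have e4 : dist (Φ (LtC M ((j : ℝ) * h))) (Φ (LtC M (((j + 1 : ℕ) : ℝ) * h)))
                  = dist (LtC M ((j : ℝ) * h)) (LtC M (((j + 1 : ℕ) : ℝ) * h)) := hΦ.dist_eq _ _
              rw [e4, dist_comm (Ψ (g (LtC M ((j : ℝ) * h)))) (Φ (LtC M ((j : ℝ) * h)))]
              linarith [hb]
          _ ≤ h + 2 * ε := by linarith
    have hkey_b := chase_key hΓXlip hΓX0 hΓXd hh (tgtB M 0) (tgtB M) (2 * ε)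
      (by positivity) rfl htgtBstep tstar hts0
    rw [← hkdef] at hkey_b
    have hmid : dist (Ψ (tgtB M k)) (Φ (LtC M ((k : ℝ) * h))) ≤ ε := by
      rcases Nat.eq_zero_or_pos k with hk0 | hk0
      · rw [hk0]
        have e0 : tgtB M 0 = L0 := rfl
        have e1 : LtC M (((0 : ℕ) : ℝ) * h) = f L0 := by
          rw [show (((0 : ℕ) : ℝ) * h) = (0 : ℝ) by push_cast; ring, hLt0M]
        rw [e0, e1]
        exact hf L0
      · have hkne : k ≠ 0 := Nat.pos_iff_ne_zero.mp hk0
        have e0 : tgtB M k = g (LtC M ((k : ℝ) * h)) := by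
          simp only [htgtBdef, if_neg hkne]
        rw [e0, dist_comm]
        exact hg _
    have hbackward : dist (Ψ (sX M tstar)) (Φ (LtC M tstar)) ≤ h + 2 * ε * k + ε := by
      have h1 : dist (Ψ (sX M tstar)) (Ψ (tgtB M k)) = dist (sX M tstar) (tgtB M k) :=
        hΨ.dist_eq _ _
      have h3 : dist (Φ (LtC M ((k : ℝ) * h))) (Φ (LtC M tstar)) ≤ tstar - (k : ℝ) * h := by
        rw [hΦ.dist_eq]
        have := hLtd ((k : ℝ) * h) tstar (by positivity) hts0
        rwa [abs_of_nonpos (by linarith), neg_sub] at this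
      calc dist (Ψ (sX M tstar)) (Φ (LtC M tstar))
          ≤ dist (Ψ (sX M tstar)) (Ψ (tgtB M k)) + dist (Ψ (tgtB M k)) (Φ (LtC M ((k : ℝ) * h)))
            + dist (Φ (LtC M ((k : ℝ) * h))) (Φ (LtC M tstar)) := dist_triangle4 _ _ _ _
        _ ≤ h + 2 * ε * k + ε := by rw [h1]; linarith [hkey_b, hmid]
    -- assemble
    have hfinal : dist (M tstar) (sX M tstar) ≤ α + 2 * h + 4 * (h * T) + 2 * ε := by
      have hmt : dist (Φ (MtC M tstar)) (Φ (LtC M tstar)) ≤ α := by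
        rw [hΦ.dist_eq]; exact hdts
      calc dist (M tstar) (sX M tstar) = dist (Ψ (M tstar)) (Ψ (sX M tstar)) :=
            (hΨ.dist_eq _ _).symm
        _ ≤ dist (Ψ (M tstar)) (Φ (MtC M tstar)) + dist (Φ (MtC M tstar)) (Φ (LtC M tstar))
            + dist (Φ (LtC M tstar)) (Ψ (sX M tstar)) := dist_triangle4 _ _ _ _
        _ ≤ (h + 2 * ε * k + ε) + α + (h + 2 * ε * k + ε) := by
            rw [dist_comm (Ψ (M tstar)) (Φ (MtC M tstar)),
              dist_comm (Φ (LtC M tstar)) (Ψ (sX M tstar))]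
            have := hforward
            have := hbackward
            linarith
        _ ≤ α + 2 * h + 4 * (h * T) + 2 * ε := by nlinarith [hεk]
    have hbdd : BddBelow ((fun t => dist (M t) (sX M t)) '' Icc (0 : ℝ) T) := by
      refine ⟨0, ?_⟩
      rintro y ⟨u, _, rfl⟩
      exact dist_nonneg
    calc sInf ((fun t => dist (M t) (sX M t)) '' Icc (0 : ℝ) T)
        ≤ dist (M tstar) (sX M tstar) := csInf_le hbdd (mem_image_of_mem _ ⟨hts0, htsT⟩)
      _ ≤ α + 2 * h + 4 * (h * T) + 2 * ε := hfinal
      _ ≤ α + (20 * T + 8) * h := by nlinarith [hh.le, hT.le, hh1, hh2]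
end

section
/- Let (X̃, ρ̃) and (X, ρ) be compact geodesic metric spaces, let T > 0, and let α ∈ (0,1). If there are no (X̃, ρ̃, α + (20T + 8)√ε, T)-winning strategies and the Gromov–Hausdorff distance satisfies d_GH(X̃, X) ≤ ε for some ε ∈ (0, α²), then there are no (X, ρ, α, T)-winning strategies. -/
open Set Metric


lemma exists_path {X : Type*} [MetricSpace X] (hGeo : IsGeodesicSpace X) :
    ∃ P : X → X → ℝ → X,
      (∀ x y t, t ≤ 0 → P x y t = x) ∧
      (∀ x y s t, dist (P x y s) (P x y t) ≤ |s - t|) ∧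
      (∀ x y t, 0 ≤ t → dist x (P x y t) ≤ t) ∧
      (∀ x y t, dist (P x y t) y ≤ max (dist x y - t) 0) := by
  choose l hl0 g hg0 hgl hgd using hGeo
  have hld : ∀ x y, l x y = dist x y := by
    intro x y
    have h := hgd x y 0 ⟨le_refl 0, hl0 x y⟩ (l x y) ⟨hl0 x y, le_refl _⟩
    rw [hg0, hgl, zero_sub, abs_neg, abs_of_nonneg (hl0 x y)] at h
    exact h.symm
  have hmem : ∀ x y (u : ℝ), max 0 (min u (l x y)) ∈ Set.Icc 0 (l x y) := fun x y u =>
    ⟨le_max_left _ _, max_le (hl0 x y) (min_le_right _ _)⟩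
  refine ⟨fun x y t => g x y (max 0 (min t (l x y))), ?_, ?_, ?_, ?_⟩
  · intro x y t ht
    dsimp only
    have h : max 0 (min t (l x y)) = 0 :=
      max_eq_left (le_trans (min_le_left _ _) ht)
    rw [h, hg0]
  · intro x y s t
    dsimp only
    rw [hgd x y _ (hmem x y s) _ (hmem x y t)]
    calc |max 0 (min s (l x y)) - max 0 (min t (l x y))|
        ≤ max |0 - 0| |min s (l x y) - min t (l x y)| := abs_max_sub_max_le_max _ _ _ _
      _ ≤ |s - t| := by
          rw [sub_self, abs_zero]
          refine max_le (abs_nonneg _) ?_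
          calc |min s (l x y) - min t (l x y)| ≤ max |s - t| |l x y - l x y| :=
                abs_min_sub_min_le_max _ _ _ _
            _ = |s - t| := by rw [sub_self, abs_zero]; exact max_eq_left (abs_nonneg _)
  · intro x y t ht
    dsimp only
    have h := hgd x y 0 ⟨le_refl 0, hl0 x y⟩ _ (hmem x y t)
    rw [hg0] at h
    rw [h, zero_sub, abs_neg, abs_of_nonneg (le_max_left _ _)]
    exact max_le ht (min_le_left _ _)
  · intro x y t
    dsimp only
    have h := hgd x y _ (hmem x y t) (l x y) ⟨hl0 x y, le_refl _⟩
    rw [hgl] at h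
    rw [h, abs_of_nonpos (by linarith [(hmem x y t).2]), ← hld]
    rcases le_total t (l x y) with h' | h'
    · refine le_trans ?_ (le_max_left _ _)
      have : min t (l x y) = t := min_eq_left h'
      rw [this]
      have := le_max_right (0:ℝ) t
      linarith [le_max_right (0:ℝ) t]
    · have h2 : max 0 (min t (l x y)) = l x y := by
        rw [min_eq_right h']; exact max_eq_right (hl0 x y)
      rw [h2]
      simp

lemma exists_traj {X : Type*} [MetricSpace X] (hGeo : IsGeodesicSpace X)
    (Δ : ℝ) (hΔ : 0 < Δ) :
    ∃ Tr : (ℕ → X) → ℝ → X,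
      (∀ p, Tr p 0 = p 0) ∧
      (∀ p q t, 0 ≤ t → (∀ j : ℕ, (j : ℝ) ≤ t / Δ + 1 → p j = q j) → Tr p t = Tr q t) ∧
      (∀ p, (∀ k, dist (p k) (p (k + 1)) ≤ Δ) →
        ∀ s t, 0 ≤ s → 0 ≤ t → dist (Tr p s) (Tr p t) ≤ |s - t|) ∧
      (∀ p, (∀ k, dist (p k) (p (k + 1)) ≤ Δ) →
        ∀ t, 0 ≤ t → ∃ k : ℕ, (k : ℝ) * Δ ≤ t ∧ t < ((k : ℝ) + 1) * Δ ∧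
          dist (Tr p t) (p (k + 1)) ≤ ((k : ℝ) + 1) * Δ - t) := by
  obtain ⟨P, hP0, hPlip, hPleft, hPright⟩ := exists_path hGeo
  refine ⟨fun p t => P (p ⌊t / Δ⌋₊) (p (⌊t / Δ⌋₊ + 1)) (t - ⌊t / Δ⌋₊ * Δ), ?_, ?_, ?_, ?_⟩
  · intro p
    dsimp only
    rw [zero_div, Nat.floor_zero]
    rw [hP0 _ _ _ (by simp)]
  · intro p q t ht h
    dsimp only
    have h1 : ((⌊t / Δ⌋₊ : ℝ)) ≤ t / Δ + 1 :=
      le_trans (Nat.floor_le (div_nonneg ht hΔ.le)) (by linarith)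
    have h2 : ((⌊t / Δ⌋₊ + 1 : ℕ) : ℝ) ≤ t / Δ + 1 := by
      push_cast
      have := Nat.floor_le (div_nonneg ht hΔ.le)
      linarith
    rw [h _ h1, h _ h2]
  · intro p hp
    -- telescope
    have tel : ∀ (a j : ℕ), dist (p a) (p (a + j)) ≤ (j : ℝ) * Δ := by
      intro a j
      induction j with
      | zero => simp
      | succ n ih =>
        calc dist (p a) (p (a + (n + 1)))
            ≤ dist (p a) (p (a + n)) + dist (p (a + n)) (p (a + n + 1)) := by
              rw [← add_assoc]; exact dist_triangle _ _ _
          _ ≤ (n : ℝ) * Δ + Δ := add_le_add ih (hp _)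
          _ = ((n + 1 : ℕ) : ℝ) * Δ := by push_cast; ring
    have key : ∀ s t, 0 ≤ s → s ≤ t →
        dist (P (p ⌊s / Δ⌋₊) (p (⌊s / Δ⌋₊ + 1)) (s - ⌊s / Δ⌋₊ * Δ))
             (P (p ⌊t / Δ⌋₊) (p (⌊t / Δ⌋₊ + 1)) (t - ⌊t / Δ⌋₊ * Δ)) ≤ t - s := by
      intro s t hs hst
      have ht : (0:ℝ) ≤ t := le_trans hs hst
      set m := ⌊s / Δ⌋₊ with hm
      set n := ⌊t / Δ⌋₊ with hn
      have hmn : m ≤ n := Nat.floor_mono (by gcongr)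
      have hms : (m : ℝ) * Δ ≤ s := by
        rw [← le_div_iff₀ hΔ]; exact Nat.floor_le (div_nonneg hs hΔ.le)
      have hms' : s < ((m : ℝ) + 1) * Δ := by
        rw [← div_lt_iff₀ hΔ]; exact_mod_cast Nat.lt_floor_add_one (s / Δ)
      have hnt : (n : ℝ) * Δ ≤ t := by
        rw [← le_div_iff₀ hΔ]; exact Nat.floor_le (div_nonneg ht hΔ.le)
      rcases eq_or_lt_of_le hmn with heq | hlt
      · rw [heq]
        calc dist _ _ ≤ |(s - n * Δ) - (t - n * Δ)| := hPlip _ _ _ _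
          _ = t - s := by rw [abs_sub_comm, show (t - ↑n * Δ) - (s - ↑n * Δ) = t - s by ring,
              abs_of_nonneg (by linarith)]
      · have d1 : dist (P (p m) (p (m + 1)) (s - m * Δ)) (p (m + 1)) ≤ ((m : ℝ) + 1) * Δ - s := by
          refine le_trans (hPright _ _ _) (max_le (by linarith [hp m]) (by linarith))
        have d3 : dist (p n) (P (p n) (p (n + 1)) (t - n * Δ)) ≤ t - n * Δ :=
          hPleft _ _ _ (by linarith)
        have hm1n : m + 1 ≤ n := hlt
        have d2 : dist (p (m + 1)) (p n) ≤ ((n : ℝ) - (m + 1)) * Δ := by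
          have := tel (m + 1) (n - (m + 1))
          rw [Nat.add_sub_cancel' hm1n] at this
          refine le_trans this (le_of_eq ?_)
          congr 1
          push_cast [Nat.cast_sub hm1n]
          ring
        calc dist _ _ ≤ dist _ (p (m + 1)) + dist (p (m + 1)) (p n) + dist (p n) _ :=
              dist_triangle4 _ _ _ _
          _ ≤ (((m : ℝ) + 1) * Δ - s) + (((n : ℝ) - (m + 1)) * Δ) + (t - n * Δ) := by
              gcongr
          _ = t - s := by ring
    intro s t hs ht
    rcases le_total s t with h | h
    · rw [abs_sub_comm, abs_of_nonneg (by linarith)]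
      exact key s t hs h
    · rw [abs_of_nonneg (by linarith), dist_comm]
      exact key t s ht h
  · intro p hp t ht
    refine ⟨⌊t / Δ⌋₊, ?_, ?_, ?_⟩
    · rw [← le_div_iff₀ hΔ]; exact Nat.floor_le (div_nonneg ht hΔ.le)
    · rw [← div_lt_iff₀ hΔ]; exact_mod_cast Nat.lt_floor_add_one (t / Δ)
    · have h1 : (⌊t / Δ⌋₊ : ℝ) * Δ ≤ t := by
        rw [← le_div_iff₀ hΔ]; exact Nat.floor_le (div_nonneg ht hΔ.le)
      have h2 : t < ((⌊t / Δ⌋₊ : ℝ) + 1) * Δ := by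
        rw [← div_lt_iff₀ hΔ]; exact_mod_cast Nat.lt_floor_add_one (t / Δ)
      refine le_trans (hPright _ _ _) (max_le ?_ (by linarith))
      have := hp ⌊t / Δ⌋₊
      linarith

lemma mem_oneLip_iff {X : Type*} [MetricSpace X] (c : ℝ → X) :
    c ∈ OneLip X ↔ ∀ s : ℝ, 0 ≤ s → ∀ t : ℝ, 0 ≤ t → dist (c s) (c t) ≤ |s - t| := by
  rw [OneLip, Set.mem_setOf_eq, lipschitzOnWith_iff_dist_le_mul]
  constructor
  · intro h s hs t ht
    simpa [Real.dist_eq] using h s hs t ht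
  · intro h s hs t ht
    simpa [Real.dist_eq] using h s hs t ht

/-- sampling combinator -/
def samp {B : Type*} (δ : ℝ) (b : B) (F : ℝ → B) : ℕ → B
  | 0 => b
  | (j + 1) => F ((j : ℝ) * δ)

@[simp] lemma samp_zero {B : Type*} (δ : ℝ) (b : B) (F : ℝ → B) : samp δ b F 0 = b := rfl
@[simp] lemma samp_succ {B : Type*} (δ : ℝ) (b : B) (F : ℝ → B) (j : ℕ) :
    samp δ b F (j + 1) = F ((j : ℝ) * δ) := rfl

/-- If there are no `(X̃, ρ̃, α + (20T + 8)√ε, T)`-winning strategies and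
`d_GH(X̃, X) ≤ ε ∈ (0, α²)`, then there are no `(X, ρ, α, T)`-winning strategies. -/
theorem no_capture_transfer
    (Xt X : Type*) [MetricSpace Xt] [CompactSpace Xt] [Nonempty Xt]
    [MetricSpace X] [CompactSpace X] [Nonempty X]
    (hXtGeo : IsGeodesicSpace Xt) (hXGeo : IsGeodesicSpace X)
    (T α ε : ℝ) (hT : 0 < T) (hα : α ∈ Set.Ioo (0 : ℝ) 1)
    (hε : ε ∈ Set.Ioo (0 : ℝ) (α ^ 2))
    (hno : ¬ HasWinningStrategies Xt (α + (20 * T + 8) * Real.sqrt ε) T)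
    (hGH : GromovHausdorff.ghDist Xt X ≤ ε) :
    ¬ HasWinningStrategies X α T := by
  classical
  obtain ⟨hα0, hα1⟩ := hα
  obtain ⟨hε0, hεα⟩ := hε
  set δ := Real.sqrt ε with hδdef
  have hδ0 : 0 < δ := Real.sqrt_pos.2 hε0
  have hδδ : δ * δ = ε := Real.mul_self_sqrt hε0.le
  have hε1 : ε < 1 := by nlinarith
  have hδ1 : δ ≤ 1 := by
    rw [hδdef, show (1:ℝ) = Real.sqrt 1 by simp]
    exact Real.sqrt_le_sqrt hε1.le
  have hεδ : ε ≤ δ := by nlinarith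
  set Δ := δ + 2 * ε with hΔdef
  have hΔ0 : 0 < Δ := by rw [hΔdef]; linarith
  have hδΔ : δ ≤ Δ := by rw [hΔdef]; linarith
  intro hXwin
  apply hno
  intro L0t
  -- the optimal coupling
  set Z := GromovHausdorff.OptimalGHCoupling Xt X with hZ
  set f : Xt → Z := GromovHausdorff.optimalGHInjl Xt X with hfdef
  set g : X → Z := GromovHausdorff.optimalGHInjr Xt X with hgdef
  have hf : Isometry f := GromovHausdorff.isometry_optimalGHInjl Xt X
  have hg : Isometry g := GromovHausdorff.isometry_optimalGHInjr Xt X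
  have hHD : hausdorffDist (Set.range f) (Set.range g) ≤ ε := by
    rw [hfdef, hgdef, GromovHausdorff.hausdorffDist_optimal]; exact hGH
  have hne_top : EMetric.hausdorffEdist (Set.range f) (Set.range g) ≠ ⊤ :=
    Metric.hausdorffEdist_ne_top_of_nonempty_of_bounded (Set.range_nonempty f)
      (Set.range_nonempty g) (isCompact_range hf.continuous).isBounded
      (isCompact_range hg.continuous).isBounded
  obtain ⟨φ, hφ⟩ : ∃ φ : Xt → X, ∀ x, dist (f x) (g (φ x)) ≤ ε := by
    have h : ∀ x : Xt, ∃ y : X, dist (f x) (g y) ≤ ε := by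
      intro x
      obtain ⟨z, hz, hzd⟩ := (isCompact_range hg.continuous).exists_infDist_eq_dist
        (Set.range_nonempty g) (f x)
      obtain ⟨y, rfl⟩ := hz
      refine ⟨y, ?_⟩
      rw [← hzd]
      exact le_trans (Metric.infDist_le_hausdorffDist_of_mem (Set.mem_range_self x) hne_top) hHD
    exact ⟨fun x => Classical.choose (h x), fun x => Classical.choose_spec (h x)⟩
  obtain ⟨ψ, hψ⟩ : ∃ ψ : X → Xt, ∀ y, dist (g y) (f (ψ y)) ≤ ε := by
    have h : ∀ y : X, ∃ x : Xt, dist (g y) (f x) ≤ ε := by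
      intro y
      obtain ⟨z, hz, hzd⟩ := (isCompact_range hf.continuous).exists_infDist_eq_dist
        (Set.range_nonempty f) (g y)
      obtain ⟨x, rfl⟩ := hz
      refine ⟨x, ?_⟩
      rw [← hzd]
      refine le_trans (Metric.infDist_le_hausdorffDist_of_mem (Set.mem_range_self y) ?_) ?_
      · rw [EMetric.hausdorffEdist_comm]; exact hne_top
      · rw [hausdorffDist_comm]; exact hHD
    exact ⟨fun y => Classical.choose (h y), fun y => Classical.choose_spec (h y)⟩
  have hφ2 : ∀ a b : Xt, dist (φ a) (φ b) ≤ dist a b + 2 * ε := by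
    intro a b
    have h4 := dist_triangle4 (g (φ a)) (f a) (f b) (g (φ b))
    rw [hf.dist_eq] at h4
    rw [← hg.dist_eq (φ a) (φ b)]
    have h1 : dist (g (φ a)) (f a) = dist (f a) (g (φ a)) := dist_comm _ _
    rw [h1] at h4
    linarith [hφ a, hφ b]
  have hψ2 : ∀ a b : X, dist (ψ a) (ψ b) ≤ dist a b + 2 * ε := by
    intro a b
    have h4 := dist_triangle4 (f (ψ a)) (g a) (g b) (f (ψ b))
    rw [hg.dist_eq] at h4
    rw [← hf.dist_eq (ψ a) (ψ b)]
    have h1 : dist (f (ψ a)) (g a) = dist (g a) (f (ψ a)) := dist_comm _ _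
    rw [h1] at h4
    linarith [hψ a, hψ b]
  obtain ⟨TrX, TrX0, TrXdep, TrXlip, TrXerr⟩ := exists_traj hXGeo Δ hΔ0
  obtain ⟨TrT, TrT0, TrTdep, TrTlip, TrTerr⟩ := exists_traj hXtGeo Δ hΔ0
  obtain ⟨s, ⟨hs1, hs2, hs3⟩, hswin⟩ := hXwin (φ L0t)
  -- the projected evader curve
  set pm : (ℝ → Xt) → ℕ → X := fun M => samp δ (φ (M 0)) (fun u => φ (M u)) with hpmdef
  set D : (ℝ → Xt) → ℝ → X := fun M => TrX (pm M) with hDdef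
  set ql : (ℝ → X) → ℕ → Xt := fun L => samp δ L0t (fun u => ψ (L u)) with hqldef
  set st : (ℝ → Xt) → ℝ → Xt :=
    fun M => if M ∈ OneLip Xt then TrT (ql (s (D M))) else fun _ => L0t with hstdef
  -- samples of a 1-Lipschitz curve move slowly
  have hpmΔ : ∀ M, M ∈ OneLip Xt → ∀ k, dist (pm M k) (pm M (k + 1)) ≤ Δ := by
    intro M hM k
    rw [mem_oneLip_iff] at hM
    cases k with
    | zero =>
      have : pm M 1 = φ (M 0) := by
        rw [hpmdef]; dsimp only; rw [show (1:ℕ) = 0 + 1 from rfl, samp_succ]; norm_num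
      rw [this]
      simp only [hpmdef, samp_zero, dist_self]
      exact hΔ0.le
    | succ j =>
      have h1 : pm M (j + 1) = φ (M ((j : ℝ) * δ)) := rfl
      have h2 : pm M (j + 2) = φ (M (((j : ℝ) + 1) * δ)) := by
        rw [hpmdef]; dsimp only; rw [show j + 2 = (j + 1) + 1 from rfl, samp_succ]; push_cast; ring_nf
      rw [h1, h2]
      refine le_trans (hφ2 _ _) ?_
      have hd : dist (M ((j : ℝ) * δ)) (M (((j : ℝ) + 1) * δ)) ≤ δ := by
        refine le_trans (hM _ (by positivity) _ (by positivity)) ?_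
        rw [abs_sub_comm, abs_of_nonneg (by nlinarith)]
        ring_nf
        nlinarith
      rw [hΔdef]
      linarith
  have hDlip : ∀ M, M ∈ OneLip Xt → D M ∈ OneLip X := by
    intro M hM
    rw [mem_oneLip_iff]
    intro u hu v hv
    exact TrXlip (pm M) (hpmΔ M hM) u v hu hv
  have hD0 : ∀ M, D M 0 = φ (M 0) := by
    intro M
    rw [hDdef]; dsimp only; rw [TrX0]; rfl
  have hqlΔ : ∀ L, L ∈ OneLip X → L 0 = φ L0t → ∀ k, dist (ql L k) (ql L (k + 1)) ≤ Δ := by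
    intro L hL hL0 k
    rw [mem_oneLip_iff] at hL
    cases k with
    | zero =>
      have h1 : ql L 1 = ψ (L 0) := by
        rw [hqldef]; dsimp only; rw [show (1:ℕ) = 0 + 1 from rfl, samp_succ]; norm_num
      have h0 : ql L 0 = L0t := rfl
      rw [h0, h1, hL0]
      have : dist L0t (ψ (φ L0t)) ≤ 2 * ε := by
        rw [← hf.dist_eq]
        calc dist (f L0t) (f (ψ (φ L0t)))
            ≤ dist (f L0t) (g (φ L0t)) + dist (g (φ L0t)) (f (ψ (φ L0t))) := dist_triangle _ _ _
          _ ≤ ε + ε := add_le_add (hφ L0t) (hψ (φ L0t))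
          _ = 2 * ε := by ring
      rw [hΔdef]
      linarith [this, hδ0]
    | succ j =>
      have h1 : ql L (j + 1) = ψ (L ((j : ℝ) * δ)) := rfl
      have h2 : ql L (j + 2) = ψ (L (((j : ℝ) + 1) * δ)) := by
        rw [hqldef]; dsimp only; rw [show j + 2 = (j + 1) + 1 from rfl, samp_succ]; push_cast; ring_nf
      rw [h1, h2]
      refine le_trans (hψ2 _ _) ?_
      have hd : dist (L ((j : ℝ) * δ)) (L (((j : ℝ) + 1) * δ)) ≤ δ := by
        refine le_trans (hL _ (by positivity) _ (by positivity)) ?_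
        rw [abs_sub_comm, abs_of_nonneg (by nlinarith)]
        ring_nf
        nlinarith
      rw [hΔdef]
      linarith
  refine ⟨st, ⟨?_, ?_, ?_⟩, ?_⟩
  · -- 1-Lipschitz outputs
    intro M hM
    rw [hstdef]
    dsimp only
    rw [if_pos hM, mem_oneLip_iff]
    intro u hu v hv
    exact TrTlip _ (hqlΔ _ (hs1 _ (hDlip M hM)) (hs2 _ (hDlip M hM))) u v hu hv
  · -- initial position
    intro M hM
    rw [hstdef]
    dsimp only
    rw [if_pos hM, TrT0]
    rfl
  · -- non-anticipativity
    intro M1 hM1 M2 hM2 τ hτ hagree t htmem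
    have h0τ : (0:ℝ) ∈ Set.Icc (0:ℝ) τ := ⟨le_refl _, hτ⟩
    have hDeq : ∀ u ∈ Set.Icc (0:ℝ) τ, D M1 u = D M2 u := by
      intro u hu
      rw [hDdef]
      dsimp only
      refine TrXdep _ _ u hu.1 ?_
      intro j hj
      cases j with
      | zero =>
        simp only [hpmdef, samp_zero]
        rw [hagree 0 h0τ]
      | succ i =>
        have h1 : pm M1 (i + 1) = φ (M1 ((i:ℝ) * δ)) := rfl
        have h2 : pm M2 (i + 1) = φ (M2 ((i:ℝ) * δ)) := rfl
        rw [h1, h2]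
        have hi : (i:ℝ) ≤ u / Δ := by push_cast at hj; linarith
        have hmem : (i:ℝ) * δ ∈ Set.Icc (0:ℝ) τ := by
          constructor
          · positivity
          · calc (i:ℝ) * δ ≤ (u / Δ) * δ := mul_le_mul_of_nonneg_right hi hδ0.le
              _ ≤ (u / Δ) * Δ := mul_le_mul_of_nonneg_left hδΔ (div_nonneg hu.1 hΔ0.le)
              _ = u := div_mul_cancel₀ u hΔ0.ne'
              _ ≤ τ := hu.2
        rw [hagree _ hmem]
    have hseq : ∀ u ∈ Set.Icc (0:ℝ) τ, s (D M1) u = s (D M2) u :=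
      hs3 _ (hDlip _ hM1) _ (hDlip _ hM2) τ hτ hDeq
    rw [hstdef]
    dsimp only
    rw [if_pos hM1, if_pos hM2]
    refine TrTdep _ _ t htmem.1 ?_
    intro j hj
    cases j with
    | zero => rfl
    | succ i =>
      have h1 : ql (s (D M1)) (i + 1) = ψ (s (D M1) ((i:ℝ) * δ)) := rfl
      have h2 : ql (s (D M2)) (i + 1) = ψ (s (D M2) ((i:ℝ) * δ)) := rfl
      rw [h1, h2]
      have hi : (i:ℝ) ≤ t / Δ := by push_cast at hj; linarith
      have hmem : (i:ℝ) * δ ∈ Set.Icc (0:ℝ) τ := by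
        constructor
        · positivity
        · calc (i:ℝ) * δ ≤ (t / Δ) * δ := mul_le_mul_of_nonneg_right hi hδ0.le
            _ ≤ (t / Δ) * Δ := mul_le_mul_of_nonneg_left hδΔ (div_nonneg htmem.1 hΔ0.le)
            _ = t := div_mul_cancel₀ t hΔ0.ne'
            _ ≤ τ := htmem.2
      rw [hseq _ hmem]
  · -- the guarantee
    intro M hM
    have hDM := hDlip M hM
    have hLlip : s (D M) ∈ OneLip X := hs1 _ hDM
    have hL0 : s (D M) 0 = φ L0t := hs2 _ hDM
    have hqlL := hqlΔ (s (D M)) hLlip hL0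
    have hDcont : ContinuousOn (D M) (Set.Icc (0:ℝ) T) := by
      have h1 : LipschitzOnWith 1 (D M) (Set.Ici (0:ℝ)) := hDM
      exact h1.continuousOn.mono (Set.Icc_subset_Ici_self)
    have hLcont : ContinuousOn (s (D M)) (Set.Icc (0:ℝ) T) := by
      have h1 : LipschitzOnWith 1 (s (D M)) (Set.Ici (0:ℝ)) := hLlip
      exact h1.continuousOn.mono (Set.Icc_subset_Ici_self)
    have hScomp : IsCompact ((fun u => dist (D M u) (s (D M) u)) '' Set.Icc (0:ℝ) T) :=
      isCompact_Icc.image_of_continuousOn (continuous_dist.comp_continuousOn' (hDcont.prodMk hLcont))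
    have hSne : ((fun u => dist (D M u) (s (D M) u)) '' Set.Icc (0:ℝ) T).Nonempty :=
      ⟨_, Set.mem_image_of_mem _ (⟨le_refl (0:ℝ), hT.le⟩ : (0:ℝ) ∈ Set.Icc (0:ℝ) T)⟩
    obtain ⟨t0, ht0, heq⟩ := hScomp.sInf_mem hSne
    have hcap : dist (D M t0) (s (D M) t0) ≤ α := le_trans (le_of_eq heq) (hswin (D M) hDM)
    have hM' := (mem_oneLip_iff M).1 hM
    have hL' := (mem_oneLip_iff (s (D M))).1 hLlip
    -- projection error at t0
    have herr1 : dist (f (M t0)) (g (D M t0)) ≤ δ + 3 * ε + 2 * δ * T := by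
      obtain ⟨k, hk1, hk2, hk3⟩ := TrXerr (pm M) (hpmΔ M hM) t0 ht0.1
      have hkδ : (k:ℝ) * δ ≤ t0 := le_trans (mul_le_mul_of_nonneg_left hδΔ (Nat.cast_nonneg k)) hk1
      have hsucc : pm M (k + 1) = φ (M ((k:ℝ) * δ)) := rfl
      have hd1 : dist (f (M t0)) (f (M ((k:ℝ) * δ))) ≤ t0 - (k:ℝ) * δ := by
        rw [hf.dist_eq]
        refine le_trans (hM' t0 ht0.1 _ (by positivity)) ?_
        rw [abs_of_nonneg (by linarith)]
      have hd3 : dist (g (φ (M ((k:ℝ) * δ)))) (g (D M t0)) ≤ ((k:ℝ) + 1) * Δ - t0 := by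
        rw [hg.dist_eq, dist_comm, ← hsucc, hDdef]
        exact hk3
      have e1 : ((k:ℝ) + 1) * Δ = (k:ℝ) * δ + 2 * ε * (k:ℝ) + δ + 2 * ε := by rw [hΔdef]; ring
      have h3 : (k:ℝ) * δ ≤ T := le_trans hkδ ht0.2
      have e3 : 2 * ε * (k:ℝ) = 2 * δ * ((k:ℝ) * δ) := by rw [← hδδ]; ring
      have e4 : 2 * δ * ((k:ℝ) * δ) ≤ 2 * δ * T :=
        mul_le_mul_of_nonneg_left h3 (by positivity)
      calc dist (f (M t0)) (g (D M t0))
          ≤ dist (f (M t0)) (f (M ((k:ℝ) * δ))) + dist (f (M ((k:ℝ) * δ))) (g (φ (M ((k:ℝ) * δ))))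
            + dist (g (φ (M ((k:ℝ) * δ)))) (g (D M t0)) := dist_triangle4 _ _ _ _
        _ ≤ (t0 - (k:ℝ) * δ) + ε + (((k:ℝ) + 1) * Δ - t0) := by
            exact add_le_add (add_le_add hd1 (hφ _)) hd3
        _ ≤ δ + 3 * ε + 2 * δ * T := by linarith
    -- lift error at t0
    have herr2 : dist (g (s (D M) t0)) (f (TrT (ql (s (D M))) t0)) ≤ δ + 3 * ε + 2 * δ * T := by
      obtain ⟨k, hk1, hk2, hk3⟩ := TrTerr (ql (s (D M))) hqlL t0 ht0.1
      have hkδ : (k:ℝ) * δ ≤ t0 := le_trans (mul_le_mul_of_nonneg_left hδΔ (Nat.cast_nonneg k)) hk1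
      have hsucc : ql (s (D M)) (k + 1) = ψ (s (D M) ((k:ℝ) * δ)) := rfl
      have hd1 : dist (g (s (D M) t0)) (g (s (D M) ((k:ℝ) * δ))) ≤ t0 - (k:ℝ) * δ := by
        rw [hg.dist_eq]
        refine le_trans (hL' t0 ht0.1 _ (by positivity)) ?_
        rw [abs_of_nonneg (by linarith)]
      have hd3 : dist (f (ψ (s (D M) ((k:ℝ) * δ)))) (f (TrT (ql (s (D M))) t0))
          ≤ ((k:ℝ) + 1) * Δ - t0 := by
        rw [hf.dist_eq, dist_comm, ← hsucc]
        exact hk3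
      have e1 : ((k:ℝ) + 1) * Δ = (k:ℝ) * δ + 2 * ε * (k:ℝ) + δ + 2 * ε := by rw [hΔdef]; ring
      have h3 : (k:ℝ) * δ ≤ T := le_trans hkδ ht0.2
      have e3 : 2 * ε * (k:ℝ) = 2 * δ * ((k:ℝ) * δ) := by rw [← hδδ]; ring
      have e4 : 2 * δ * ((k:ℝ) * δ) ≤ 2 * δ * T :=
        mul_le_mul_of_nonneg_left h3 (by positivity)
      calc dist (g (s (D M) t0)) (f (TrT (ql (s (D M))) t0))
          ≤ dist (g (s (D M) t0)) (g (s (D M) ((k:ℝ) * δ)))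
            + dist (g (s (D M) ((k:ℝ) * δ))) (f (ψ (s (D M) ((k:ℝ) * δ))))
            + dist (f (ψ (s (D M) ((k:ℝ) * δ)))) (f (TrT (ql (s (D M))) t0)) :=
              dist_triangle4 _ _ _ _
        _ ≤ (t0 - (k:ℝ) * δ) + ε + (((k:ℝ) + 1) * Δ - t0) := by
            exact add_le_add (add_le_add hd1 (hψ _)) hd3
        _ ≤ δ + 3 * ε + 2 * δ * T := by linarith
    have hstM : ∀ u : ℝ, st M u = TrT (ql (s (D M))) u := by
      intro u
      rw [hstdef]
      dsimp only
      rw [if_pos hM]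
    have hfinal : dist (M t0) (st M t0) ≤ α + (20 * T + 8) * δ := by
      rw [hstM, ← hf.dist_eq]
      calc dist (f (M t0)) (f (TrT (ql (s (D M))) t0))
          ≤ dist (f (M t0)) (g (D M t0)) + dist (g (D M t0)) (g (s (D M) t0))
            + dist (g (s (D M) t0)) (f (TrT (ql (s (D M))) t0)) := dist_triangle4 _ _ _ _
        _ ≤ (δ + 3 * ε + 2 * δ * T) + α + (δ + 3 * ε + 2 * δ * T) := by
            refine add_le_add (add_le_add herr1 ?_) herr2
            rw [hg.dist_eq]
            exact hcap
        _ ≤ α + (20 * T + 8) * δ := by nlinarith [hεδ, mul_pos hδ0 hT]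
    refine le_trans (csInf_le ?_ ?_) hfinal
    · exact ⟨0, by rintro _ ⟨u, hu, rfl⟩; exact dist_nonneg⟩
    · exact ⟨t0, ht0, rfl⟩
end

section
/- Let (X, ρ) be a compact geodesic metric space, let T > 0, let α ∈ (0,1), and let {(G_n, ρ_n)}_{n∈ℕ} be a sequence of compact geodesic metric spaces (e.g., finite metric graphs) such that d_GH(X, G_n) → 0 as n → ∞. Then the following are equivalent: (1) for every α̃ > α there exist (X, ρ, α̃, T)-winning strategies; (2) for each n ∈ ℕ there exist (G_n, ρ_n, α_n, T)-winning strategies with α_n → α as n → ∞. -/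
namespace CaptureAux

variable {X : Type*} [MetricSpace X]

noncomputable def geoLen (h : IsGeodesicSpace X) (x y : X) : ℝ := (h x y).choose

noncomputable def geoRaw (h : IsGeodesicSpace X) (x y : X) : ℝ → X :=
  (h x y).choose_spec.2.choose

lemma geoLen_nonneg (h : IsGeodesicSpace X) (x y : X) : 0 ≤ geoLen h x y :=
  (h x y).choose_spec.1

lemma geoRaw_zero (h : IsGeodesicSpace X) (x y : X) : geoRaw h x y 0 = x :=
  (h x y).choose_spec.2.choose_spec.1

lemma geoRaw_len (h : IsGeodesicSpace X) (x y : X) : geoRaw h x y (geoLen h x y) = y :=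
  (h x y).choose_spec.2.choose_spec.2.1

lemma geoRaw_dist (h : IsGeodesicSpace X) (x y : X) {t t' : ℝ}
    (ht : t ∈ Set.Icc (0:ℝ) (geoLen h x y)) (ht' : t' ∈ Set.Icc (0:ℝ) (geoLen h x y)) :
    dist (geoRaw h x y t) (geoRaw h x y t') = |t - t'| :=
  (h x y).choose_spec.2.choose_spec.2.2 t ht t' ht'

lemma geoLen_eq (h : IsGeodesicSpace X) (x y : X) : geoLen h x y = dist x y := by
  have h0 : (0:ℝ) ∈ Set.Icc (0:ℝ) (geoLen h x y) := ⟨le_refl _, geoLen_nonneg h x y⟩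
  have hl : geoLen h x y ∈ Set.Icc (0:ℝ) (geoLen h x y) := ⟨geoLen_nonneg h x y, le_refl _⟩
  have := geoRaw_dist h x y h0 hl
  rw [geoRaw_zero, geoRaw_len] at this
  have habs : |0 - geoLen h x y| = geoLen h x y := by
    rw [abs_sub_comm, sub_zero, abs_of_nonneg (geoLen_nonneg h x y)]
  rw [habs] at this
  exact this.symm

/-- Clamped geodesic from `x` to `y`, 1-Lipschitz on all of `ℝ`. -/
noncomputable def geo (h : IsGeodesicSpace X) (x y : X) (u : ℝ) : X :=
  geoRaw h x y (min (max u 0) (geoLen h x y))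

lemma clamp_mem (h : IsGeodesicSpace X) (x y : X) (u : ℝ) :
    min (max u 0) (geoLen h x y) ∈ Set.Icc (0:ℝ) (geoLen h x y) :=
  ⟨le_min (le_max_right u 0) (geoLen_nonneg h x y), min_le_right _ _⟩

lemma geo_lip (h : IsGeodesicSpace X) (x y : X) (u v : ℝ) :
    dist (geo h x y u) (geo h x y v) ≤ |u - v| := by
  have := geoRaw_dist h x y (clamp_mem h x y u) (clamp_mem h x y v)
  rw [geo, geo, this]
  have h1 : |min (max u 0) (geoLen h x y) - min (max v 0) (geoLen h x y)| ≤ |max u 0 - max v 0| := by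
    have := abs_min_sub_min_le_max (max u 0) (geoLen h x y) (max v 0) (geoLen h x y)
    simpa using this
  have h2 : |max u 0 - max v 0| ≤ |u - v| := abs_max_sub_max_le_abs u v 0
  exact h1.trans h2

lemma geo_zero (h : IsGeodesicSpace X) (x y : X) : geo h x y 0 = x := by
  rw [geo]
  have : min (max (0:ℝ) 0) (geoLen h x y) = 0 := by
    simp [geoLen_nonneg h x y]
  rw [this, geoRaw_zero]

lemma geo_of_ge (h : IsGeodesicSpace X) (x y : X) {u : ℝ} (hu : dist x y ≤ u) :
    geo h x y u = y := by
  rw [geo]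
  have hll : geoLen h x y = dist x y := geoLen_eq h x y
  have : min (max u 0) (geoLen h x y) = geoLen h x y := by
    rw [min_eq_right]
    rw [hll]
    exact hu.trans (le_max_left u 0)
  rw [this, geoRaw_len]

lemma geo_dist_right (h : IsGeodesicSpace X) (x y : X) (u : ℝ) :
    dist (geo h x y u) y ≤ dist x y := by
  have key := geoRaw_dist h x y (clamp_mem h x y u) ⟨geoLen_nonneg h x y, le_refl _⟩
  rw [geoRaw_len] at key
  rw [geo, key, ← geoLen_eq h x y]
  rcases clamp_mem h x y u with ⟨hc0, hcl⟩
  rw [abs_of_nonpos (by linarith)]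
  linarith

/-- Piecewise-geodesic interpolation of the sequence `z`, with time step `d` per segment. -/
noncomputable def interp (h : IsGeodesicSpace X) (d : ℝ) (z : ℕ → X) (t : ℝ) : X :=
  geo h (z ⌊t / d⌋₊) (z (⌊t / d⌋₊ + 1)) (t - ⌊t / d⌋₊ * d)

section Interp

variable (h : IsGeodesicSpace X) {d : ℝ} (hd : 0 < d) {z : ℕ → X}
  (hz : ∀ k, dist (z k) (z (k + 1)) ≤ d)

include hd

lemma interp_grid (k : ℕ) : interp h d z (k * d) = z k := by
  have hfloor : ⌊(k : ℝ) * d / d⌋₊ = k := by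
    rw [mul_div_cancel_right₀ _ (ne_of_gt hd), Nat.floor_natCast]
  rw [interp, hfloor, sub_self, geo_zero]

include hz

lemma interp_eq_on {k : ℕ} {t : ℝ} (h1 : (k : ℝ) * d ≤ t) (h2 : t ≤ (k + 1 : ℕ) * d) :
    interp h d z t = geo h (z k) (z (k + 1)) (t - k * d) := by
  rcases lt_or_eq_of_le h2 with h2' | h2'
  · have ht0 : 0 ≤ t := le_trans (mul_nonneg (Nat.cast_nonneg k) hd.le) h1
    have hfloor : ⌊t / d⌋₊ = k := by
      rw [Nat.floor_eq_iff (div_nonneg ht0 hd.le)]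
      constructor
      · rw [le_div_iff₀ hd]; exact h1
      · rw [div_lt_iff₀ hd]
        calc t < (k + 1 : ℕ) * d := h2'
        _ = ((k : ℝ) + 1) * d := by push_cast; ring
    rw [interp, hfloor]
  · rw [h2']
    have hrt : interp h d z ((k + 1 : ℕ) * d) = z (k + 1) := interp_grid h hd (k + 1)
    rw [hrt]
    have : ((k + 1 : ℕ) : ℝ) * d - k * d = d := by push_cast; ring
    rw [this]
    exact (geo_of_ge h _ _ ((hz k).trans (le_refl d))).symm

lemma interp_lip_local {k : ℕ} {s t : ℝ} (hs1 : (k : ℝ) * d ≤ s) (hs2 : s ≤ (k + 1 : ℕ) * d)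
    (ht1 : (k : ℝ) * d ≤ t) (ht2 : t ≤ (k + 1 : ℕ) * d) :
    dist (interp h d z s) (interp h d z t) ≤ |s - t| := by
  rw [interp_eq_on h hd hz hs1 hs2, interp_eq_on h hd hz ht1 ht2]
  have := geo_lip h (z k) (z (k + 1)) (s - k * d) (t - k * d)
  calc dist _ _ ≤ |s - k * d - (t - k * d)| := this
  _ = |s - t| := by ring_nf

lemma interp_lip_aux (k : ℕ) : ∀ s t : ℝ, 0 ≤ s → s ≤ t → t ≤ (k + 1 : ℕ) * d →
    dist (interp h d z s) (interp h d z t) ≤ t - s := by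
  induction k with
  | zero =>
    intro s t hs hst ht
    have h0 : ((0 : ℕ) : ℝ) * d = 0 := by norm_num
    have := interp_lip_local h hd hz (k := 0) (s := s) (t := t)
      (by rw [h0]; exact hs) (by linarith) (by rw [h0]; linarith) ht
    rwa [abs_of_nonpos (by linarith), neg_sub] at this
  | succ k ih =>
    intro s t hs hst ht
    by_cases hcase : t ≤ (k + 1 : ℕ) * d
    · exact ih s t hs hst hcase
    push_neg at hcase
    by_cases hcase2 : ((k + 1 : ℕ) : ℝ) * d ≤ s
    · have := interp_lip_local h hd hz (k := k + 1) (s := s) (t := t) hcase2 (hst.trans ht)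
        (hcase2.trans hst) ht
      rwa [abs_of_nonpos (by linarith), neg_sub] at this
    · push_neg at hcase2
      have hm0 : (0 : ℝ) ≤ ((k + 1 : ℕ) : ℝ) * d := by positivity
      have step1 : dist (interp h d z s) (interp h d z ((k + 1 : ℕ) * d)) ≤
          ((k + 1 : ℕ) : ℝ) * d - s := ih s _ hs (le_of_lt hcase2) (le_refl _)
      have step2 : dist (interp h d z ((k + 1 : ℕ) * d)) (interp h d z t) ≤
          t - ((k + 1 : ℕ) : ℝ) * d := by
        have := interp_lip_local h hd hz (k := k + 1) (s := ((k + 1 : ℕ) : ℝ) * d) (t := t)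
          (le_refl _) (by push_cast; nlinarith [hd.le]) (le_of_lt hcase) ht
        rwa [abs_of_nonpos (by linarith), neg_sub] at this
      calc dist (interp h d z s) (interp h d z t) ≤ _ + _ := dist_triangle _ _ _
      _ ≤ _ := by linarith

lemma interp_lip {s t : ℝ} (hs : 0 ≤ s) (ht : 0 ≤ t) :
    dist (interp h d z s) (interp h d z t) ≤ |s - t| := by
  rcases le_total s t with hst | hst
  · have hk : t ≤ (⌊t / d⌋₊ + 1 : ℕ) * d := by
      have := Nat.lt_floor_add_one (t / d)
      push_cast
      nlinarith [(div_lt_iff₀ hd).mp this]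
    have := interp_lip_aux h hd hz ⌊t / d⌋₊ s t hs hst hk
    rwa [abs_of_nonpos (by linarith), neg_sub]
  · have hk : s ≤ (⌊s / d⌋₊ + 1 : ℕ) * d := by
      have := Nat.lt_floor_add_one (s / d)
      push_cast
      nlinarith [(div_lt_iff₀ hd).mp this]
    have := interp_lip_aux h hd hz ⌊s / d⌋₊ t s ht hst hk
    rw [dist_comm] at this
    rwa [abs_of_nonneg (by linarith)]

lemma interp_onelip : LipschitzOnWith 1 (interp h d z) (Set.Ici (0 : ℝ)) := by
  rw [lipschitzOnWith_iff_dist_le_mul]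
  intro s hs t ht
  have := interp_lip h hd hz (Set.mem_Ici.mp hs) (Set.mem_Ici.mp ht)
  simpa [Real.dist_eq] using this

omit hz in
lemma interp_zero : interp h d z 0 = z 0 := by
  have := interp_grid h hd (z := z) 0
  simpa using this

omit hd in
lemma interp_track (t : ℝ) : dist (interp h d z t) (z (⌊t / d⌋₊ + 1)) ≤ d := by
  rw [interp]
  exact (geo_dist_right h _ _ _).trans (hz _)

omit hd hz in
lemma interp_congr {z' : ℕ → X} {t : ℝ}
    (hzz : ∀ j ≤ ⌊t / d⌋₊ + 1, z j = z' j) :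
    interp h d z t = interp h d z' t := by
  rw [interp, interp, hzz _ (Nat.le_succ _), hzz _ (le_refl _)]

end Interp

open GromovHausdorff Metric in
lemma exists_approx_maps (X Y : Type*) [MetricSpace X] [CompactSpace X] [Nonempty X]
    [MetricSpace Y] [CompactSpace Y] [Nonempty Y] {ε : ℝ}
    (hε : GromovHausdorff.ghDist X Y < ε) :
    ∃ (φ : Y → X) (ψ : X → Y),
      (∀ y y', dist (φ y) (φ y') ≤ dist y y' + 2 * ε) ∧
      (∀ x x', dist (ψ x) (ψ x') ≤ dist x x' + 2 * ε) ∧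
      (∀ y, dist y (ψ (φ y)) ≤ 2 * ε) := by
  set Z := OptimalGHCoupling X Y
  set f : X → Z := optimalGHInjl X Y
  set g : Y → Z := optimalGHInjr X Y
  have hf : Isometry f := isometry_optimalGHInjl X Y
  have hg : Isometry g := isometry_optimalGHInjr X Y
  have hH : hausdorffDist (Set.range f) (Set.range g) < ε := by
    rw [hausdorffDist_optimal]; exact hε
  have hne : EMetric.hausdorffEdist (Set.range f) (Set.range g) ≠ ⊤ := by
    apply hausdorffEdist_ne_top_of_nonempty_of_bounded (Set.range_nonempty f)
      (Set.range_nonempty g)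
    · exact (isCompact_range hf.continuous).isBounded
    · exact (isCompact_range hg.continuous).isBounded
  have hφ : ∀ y : Y, ∃ x : X, dist (g y) (f x) < ε := by
    intro y
    obtain ⟨b, hb, hd⟩ := exists_dist_lt_of_hausdorffDist_lt' (Set.mem_range_self y) hH hne
    obtain ⟨x, rfl⟩ := hb
    exact ⟨x, by rwa [dist_comm]⟩
  have hψ : ∀ x : X, ∃ y : Y, dist (f x) (g y) < ε := by
    intro x
    obtain ⟨b, hb, hd⟩ := exists_dist_lt_of_hausdorffDist_lt (Set.mem_range_self x) hH hne
    obtain ⟨y, rfl⟩ := hb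
    exact ⟨y, hd⟩
  choose φ hφ' using hφ
  choose ψ hψ' using hψ
  refine ⟨φ, ψ, ?_, ?_, ?_⟩
  · intro y y'
    have heq : dist (φ y) (φ y') = dist (f (φ y)) (f (φ y')) := (hf.dist_eq _ _).symm
    have h1 := hφ' y
    have h2 := hφ' y'
    have h3 := hg.dist_eq y y'
    have t1 := dist_triangle (f (φ y)) (g y) (f (φ y'))
    have t2 := dist_triangle (g y) (g y') (f (φ y'))
    have c1 : dist (f (φ y)) (g y) = dist (g y) (f (φ y)) := dist_comm _ _
    have c2 : dist (g y') (f (φ y')) = dist (f (φ y')) (g y') := dist_comm _ _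
    rw [heq]
    linarith
  · intro x x'
    have heq : dist (ψ x) (ψ x') = dist (g (ψ x)) (g (ψ x')) := (hg.dist_eq _ _).symm
    have h1 := hψ' x
    have h2 := hψ' x'
    have t1 := dist_triangle (g (ψ x)) (f x) (g (ψ x'))
    have t2 := dist_triangle (f x) (f x') (g (ψ x'))
    have c1 : dist (g (ψ x)) (f x) = dist (f x) (g (ψ x)) := dist_comm _ _
    have h3 := hf.dist_eq x x'
    rw [heq]
    linarith
  · intro y
    have heq : dist y (ψ (φ y)) = dist (g y) (g (ψ (φ y))) := (hg.dist_eq _ _).symm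
    have h1 := hφ' y
    have h2 := hψ' (φ y)
    have t1 := dist_triangle (g y) (f (φ y)) (g (ψ (φ y)))
    rw [heq]
    linarith

lemma onelip_dist {Y : Type*} [MetricSpace Y] {N : ℝ → Y} (hN : N ∈ OneLip Y) {a b : ℝ}
    (ha : 0 ≤ a) (hb : 0 ≤ b) : dist (N a) (N b) ≤ |a - b| := by
  have := (lipschitzOnWith_iff_dist_le_mul.mp hN) a (Set.mem_Ici.mpr ha) b (Set.mem_Ici.mpr hb)
  simpa [Real.dist_eq] using this

section Transfer

variable {X Y : Type*} [MetricSpace X] [MetricSpace Y]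

/-- sample sequence of the image of a curve under an almost-isometry,
with a one-step delay. -/
def seqZ (φ : Y → X) (δ : ℝ) (N : ℝ → Y) (j : ℕ) : X := φ (N (((j - 1 : ℕ) : ℝ) * δ))

def seqW (ψ : X → Y) (L0 : Y) (δ : ℝ) (P : ℝ → X) (j : ℕ) : Y :=
  if j = 0 then L0 else ψ (P (((j - 1 : ℕ) : ℝ) * δ))

variable {φ : Y → X} {ψ : X → Y} {ε δ : ℝ}

lemma seqZ_step (hφ : ∀ y y', dist (φ y) (φ y') ≤ dist y y' + 2 * ε)
    (hδ : 0 ≤ δ) (hε : 0 ≤ ε) {N : ℝ → Y} (hN : N ∈ OneLip Y) (j : ℕ) :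
    dist (seqZ φ δ N j) (seqZ φ δ N (j + 1)) ≤ δ + 2 * ε := by
  cases j with
  | zero => simp [seqZ]; linarith
  | succ j =>
    have h1 : dist (seqZ φ δ N (j + 1)) (seqZ φ δ N (j + 2)) ≤
        dist (N ((j : ℝ) * δ)) (N (((j : ℝ) + 1) * δ)) + 2 * ε := by
      have e1 : ((j + 1 - 1 : ℕ) : ℝ) = (j : ℝ) := by simp
      have e2 : ((j + 2 - 1 : ℕ) : ℝ) = (j : ℝ) + 1 := by push_cast; ring
      simpa [seqZ, e1, e2] using hφ (N ((j : ℝ) * δ)) (N (((j : ℝ) + 1) * δ))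
    have h2 : dist (N ((j : ℝ) * δ)) (N (((j : ℝ) + 1) * δ)) ≤ δ := by
      have := onelip_dist hN (a := (j : ℝ) * δ) (b := ((j : ℝ) + 1) * δ)
        (by positivity) (by positivity)
      calc dist _ _ ≤ |(j : ℝ) * δ - ((j : ℝ) + 1) * δ| := this
      _ = δ := by rw [abs_of_nonpos (by nlinarith)]; ring
    calc dist _ _ ≤ _ := h1
    _ ≤ δ + 2 * ε := by linarith

lemma seqW_step (hψ : ∀ x x', dist (ψ x) (ψ x') ≤ dist x x' + 2 * ε)
    (hδ : 0 ≤ δ) (hε : 0 ≤ ε) {L0 : Y} {P : ℝ → X} (hP : P ∈ OneLip X)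
    (h0 : dist L0 (ψ (P 0)) ≤ 2 * ε) (j : ℕ) :
    dist (seqW ψ L0 δ P j) (seqW ψ L0 δ P (j + 1)) ≤ δ + 4 * ε := by
  cases j with
  | zero =>
    have e0 : seqW ψ L0 δ P 0 = L0 := by simp [seqW]
    have e1 : seqW ψ L0 δ P 1 = ψ (P 0) := by simp [seqW]
    rw [e0, e1]
    linarith
  | succ j =>
    have e1 : ((j + 1 - 1 : ℕ) : ℝ) = (j : ℝ) := by simp
    have e2 : ((j + 2 - 1 : ℕ) : ℝ) = (j : ℝ) + 1 := by push_cast; ring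
    have h1 : dist (seqW ψ L0 δ P (j + 1)) (seqW ψ L0 δ P (j + 2)) ≤
        dist (P ((j : ℝ) * δ)) (P (((j : ℝ) + 1) * δ)) + 2 * ε := by
      simpa [seqW, e1, e2] using hψ (P ((j : ℝ) * δ)) (P (((j : ℝ) + 1) * δ))
    have h2 : dist (P ((j : ℝ) * δ)) (P (((j : ℝ) + 1) * δ)) ≤ δ := by
      have := onelip_dist hP (a := (j : ℝ) * δ) (b := ((j : ℝ) + 1) * δ)
        (by positivity) (by positivity)
      calc dist _ _ ≤ |(j : ℝ) * δ - ((j : ℝ) + 1) * δ| := this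
      _ = δ := by rw [abs_of_nonpos (by nlinarith)]; ring
    calc dist _ _ ≤ _ := h1
    _ ≤ δ + 4 * ε := by linarith


lemma floor_mul_le {d t : ℝ} (hd : 0 < d) (ht : 0 ≤ t) : (⌊t / d⌋₊ : ℝ) * d ≤ t := by
  have := Nat.floor_le (div_nonneg ht hd.le)
  calc (⌊t / d⌋₊ : ℝ) * d ≤ (t / d) * d := mul_le_mul_of_nonneg_right this hd.le
  _ = t := div_mul_cancel₀ t hd.ne'

lemma lt_floor_succ_mul {d t : ℝ} (hd : 0 < d) : t < ((⌊t / d⌋₊ : ℝ) + 1) * d := by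
  have := Nat.lt_floor_add_one (t / d)
  calc t = (t / d) * d := (div_mul_cancel₀ t hd.ne').symm
  _ < ((⌊t / d⌋₊ : ℝ) + 1) * d := by
    apply mul_lt_mul_of_pos_right _ hd
    exact_mod_cast this

lemma transfer (hX : IsGeodesicSpace X) (hY : IsGeodesicSpace Y)
    {α T : ℝ} (hT : 0 < T) (hε : 0 < ε) (hδ : 0 < δ)
    (hφ : ∀ y y', dist (φ y) (φ y') ≤ dist y y' + 2 * ε)
    (hψ : ∀ x x', dist (ψ x) (ψ x') ≤ dist x x' + 2 * ε)
    (hψφ : ∀ y, dist y (ψ (φ y)) ≤ 2 * ε)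
    (hw : HasWinningStrategies X α T) :
    HasWinningStrategies Y (α + (5 * δ + 20 * ε + 6 * T * ε / δ)) T := by
  classical
  intro L0
  obtain ⟨sX, ⟨sXlip, sXinit, sXna⟩, sXwin⟩ := hw (φ L0)
  have hd1 : (0:ℝ) < δ + 2 * ε := by linarith
  have hd2 : (0:ℝ) < δ + 4 * ε := by linarith
  set MM : (ℝ → Y) → ℝ → X := fun N => interp hX (δ + 2 * ε) (seqZ φ δ N) with hMMdef
  set LL : (ℝ → Y) → ℝ → Y :=
    fun N => interp hY (δ + 4 * ε) (seqW ψ L0 δ (sX (MM N))) with hLLdef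
  have hMMlip : ∀ N ∈ OneLip Y, MM N ∈ OneLip X := fun N hN =>
    interp_onelip hX hd1 (seqZ_step hφ hδ.le hε.le hN)
  have hPPlip : ∀ N ∈ OneLip Y, sX (MM N) ∈ OneLip X := fun N hN => sXlip _ (hMMlip N hN)
  have hPP0 : ∀ N ∈ OneLip Y, sX (MM N) 0 = φ L0 := fun N hN => sXinit _ (hMMlip N hN)
  have hW0 : ∀ N ∈ OneLip Y, dist L0 (ψ (sX (MM N) 0)) ≤ 2 * ε := by
    intro N hN; rw [hPP0 N hN]; exact hψφ L0
  have hLLlip : ∀ N ∈ OneLip Y, LL N ∈ OneLip Y := fun N hN =>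
    interp_onelip hY hd2 (seqW_step hψ hδ.le hε.le (hPPlip N hN) (hW0 N hN))
  have hLL0 : ∀ N ∈ OneLip Y, LL N 0 = L0 := by
    intro N hN
    have := interp_zero hY hd2 (z := seqW ψ L0 δ (sX (MM N)))
    simpa [seqW] using this
  -- tracking estimates
  have trackA : ∀ N ∈ OneLip Y, ∀ t : ℝ, 0 ≤ t → t ≤ T →
      dist (φ (N t)) (MM N t) ≤ 2 * δ + 6 * ε + 2 * T * ε / δ := by
    intro N hN t ht htT
    set k := ⌊t / (δ + 2 * ε)⌋₊ with hk
    have hk1 : (k : ℝ) * (δ + 2 * ε) ≤ t := floor_mul_le hd1 ht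
    have hk2 : t < ((k : ℝ) + 1) * (δ + 2 * ε) := lt_floor_succ_mul hd1
    have hkδt : (k : ℝ) * δ ≤ t :=
      le_trans (by nlinarith [(by positivity : (0:ℝ) ≤ (k:ℝ)), hε.le]) hk1
    have hkT : (k : ℝ) * δ ≤ T := le_trans hkδt htT
    have hkdiv : (k : ℝ) ≤ T / δ := (le_div_iff₀ hδ).mpr hkT
    have hkbound : 2 * ε * (k : ℝ) ≤ 2 * T * ε / δ := by
      calc 2 * ε * (k : ℝ) ≤ 2 * ε * (T / δ) :=
        mul_le_mul_of_nonneg_left hkdiv (by linarith)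
      _ = 2 * T * ε / δ := by ring
    have hZ : seqZ φ δ N (k + 1) = φ (N ((k : ℝ) * δ)) := by
      simp [seqZ]
    have hb1 : dist (φ (N t)) (seqZ φ δ N (k + 1)) ≤ (t - (k : ℝ) * δ) + 2 * ε := by
      rw [hZ]
      have h1 := hφ (N t) (N ((k : ℝ) * δ))
      have h2 := onelip_dist hN (a := t) (b := (k : ℝ) * δ) ht (by positivity)
      rw [abs_of_nonneg (by linarith)] at h2
      linarith
    have hb2 : dist (MM N t) (seqZ φ δ N (k + 1)) ≤ δ + 2 * ε :=
      interp_track hX (seqZ_step hφ hδ.le hε.le hN) t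
    have hk2' : t ≤ (k : ℝ) * δ + 2 * ε * (k : ℝ) + δ + 2 * ε := by nlinarith
    calc dist (φ (N t)) (MM N t)
        ≤ dist (φ (N t)) (seqZ φ δ N (k + 1)) + dist (seqZ φ δ N (k + 1)) (MM N t) :=
          dist_triangle _ _ _
    _ ≤ ((t - (k : ℝ) * δ) + 2 * ε) + (δ + 2 * ε) := by
        rw [dist_comm (seqZ φ δ N (k + 1)) (MM N t)]; linarith
    _ ≤ 2 * δ + 6 * ε + 2 * T * ε / δ := by linarith
  have trackB : ∀ N ∈ OneLip Y, ∀ t : ℝ, 0 ≤ t → t ≤ T →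
      dist (ψ (sX (MM N) t)) (LL N t) ≤ 2 * δ + 10 * ε + 4 * T * ε / δ := by
    intro N hN t ht htT
    set k := ⌊t / (δ + 4 * ε)⌋₊ with hk
    have hk1 : (k : ℝ) * (δ + 4 * ε) ≤ t := floor_mul_le hd2 ht
    have hk2 : t < ((k : ℝ) + 1) * (δ + 4 * ε) := lt_floor_succ_mul hd2
    have hkδt : (k : ℝ) * δ ≤ t :=
      le_trans (by nlinarith [(by positivity : (0:ℝ) ≤ (k:ℝ)), hε.le]) hk1
    have hkT : (k : ℝ) * δ ≤ T := le_trans hkδt htT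
    have hkdiv : (k : ℝ) ≤ T / δ := (le_div_iff₀ hδ).mpr hkT
    have hkbound : 4 * ε * (k : ℝ) ≤ 4 * T * ε / δ := by
      calc 4 * ε * (k : ℝ) ≤ 4 * ε * (T / δ) :=
        mul_le_mul_of_nonneg_left hkdiv (by linarith)
      _ = 4 * T * ε / δ := by ring
    have hZ : seqW ψ L0 δ (sX (MM N)) (k + 1) = ψ (sX (MM N) ((k : ℝ) * δ)) := by
      simp [seqW]
    have hb1 : dist (ψ (sX (MM N) t)) (seqW ψ L0 δ (sX (MM N)) (k + 1)) ≤
        (t - (k : ℝ) * δ) + 2 * ε := by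
      rw [hZ]
      have h1 := hψ (sX (MM N) t) (sX (MM N) ((k : ℝ) * δ))
      have h2 := onelip_dist (hPPlip N hN) (a := t) (b := (k : ℝ) * δ) ht (by positivity)
      rw [abs_of_nonneg (by linarith)] at h2
      linarith
    have hb2 : dist (LL N t) (seqW ψ L0 δ (sX (MM N)) (k + 1)) ≤ δ + 4 * ε :=
      interp_track hY (seqW_step hψ hδ.le hε.le (hPPlip N hN) (hW0 N hN)) t
    have hk2' : t ≤ (k : ℝ) * δ + 4 * ε * (k : ℝ) + δ + 4 * ε := by nlinarith
    calc dist (ψ (sX (MM N) t)) (LL N t)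
        ≤ dist (ψ (sX (MM N) t)) (seqW ψ L0 δ (sX (MM N)) (k + 1)) +
          dist (seqW ψ L0 δ (sX (MM N)) (k + 1)) (LL N t) := dist_triangle _ _ _
    _ ≤ ((t - (k : ℝ) * δ) + 2 * ε) + (δ + 4 * ε) := by
        rw [dist_comm (seqW ψ L0 δ (sX (MM N)) (k + 1)) (LL N t)]; linarith
    _ ≤ 2 * δ + 10 * ε + 4 * T * ε / δ := by linarith
  -- non-anticipativity
  have hMMcongr : ∀ N1 ∈ OneLip Y, ∀ N2 ∈ OneLip Y, ∀ τ : ℝ, 0 ≤ τ →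
      (∀ t ∈ Set.Icc (0:ℝ) τ, N1 t = N2 t) →
      ∀ t ∈ Set.Icc (0:ℝ) τ, MM N1 t = MM N2 t := by
    intro N1 h1 N2 h2 τ hτ hagree t ht
    apply interp_congr
    intro j hj
    have hjk : ((j - 1 : ℕ) : ℝ) ≤ (⌊t / (δ + 2 * ε)⌋₊ : ℝ) := by
      have : (j - 1 : ℕ) ≤ ⌊t / (δ + 2 * ε)⌋₊ := by omega
      exact_mod_cast this
    have hmem : ((j - 1 : ℕ) : ℝ) * δ ∈ Set.Icc (0:ℝ) τ := by
      constructor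
      · positivity
      · have ha : ((j - 1 : ℕ) : ℝ) * δ ≤ (⌊t / (δ + 2 * ε)⌋₊ : ℝ) * δ :=
          mul_le_mul_of_nonneg_right hjk hδ.le
        have hb : (⌊t / (δ + 2 * ε)⌋₊ : ℝ) * δ ≤ (⌊t / (δ + 2 * ε)⌋₊ : ℝ) * (δ + 2 * ε) := by
          nlinarith [(by positivity : (0:ℝ) ≤ (⌊t / (δ + 2 * ε)⌋₊:ℝ)), hε.le]
        have hc : (⌊t / (δ + 2 * ε)⌋₊ : ℝ) * (δ + 2 * ε) ≤ t := floor_mul_le hd1 ht.1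
        linarith [ht.2]
    simp only [seqZ]
    rw [hagree _ hmem]
  have hPPcongr : ∀ N1 ∈ OneLip Y, ∀ N2 ∈ OneLip Y, ∀ τ : ℝ, 0 ≤ τ →
      (∀ t ∈ Set.Icc (0:ℝ) τ, N1 t = N2 t) →
      ∀ t ∈ Set.Icc (0:ℝ) τ, sX (MM N1) t = sX (MM N2) t := by
    intro N1 h1 N2 h2 τ hτ hagree t ht
    exact sXna (MM N1) (hMMlip N1 h1) (MM N2) (hMMlip N2 h2) τ hτ
      (hMMcongr N1 h1 N2 h2 τ hτ hagree) t ht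
  have hLLcongr : ∀ N1 ∈ OneLip Y, ∀ N2 ∈ OneLip Y, ∀ τ : ℝ, 0 ≤ τ →
      (∀ t ∈ Set.Icc (0:ℝ) τ, N1 t = N2 t) →
      ∀ t ∈ Set.Icc (0:ℝ) τ, LL N1 t = LL N2 t := by
    intro N1 h1 N2 h2 τ hτ hagree t ht
    apply interp_congr
    intro j hj
    cases j with
    | zero => simp [seqW]
    | succ m =>
      have hjk : ((m : ℕ) : ℝ) ≤ (⌊t / (δ + 4 * ε)⌋₊ : ℝ) := by
        have : m ≤ ⌊t / (δ + 4 * ε)⌋₊ := by omega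
        exact_mod_cast this
      have hmem : ((m : ℕ) : ℝ) * δ ∈ Set.Icc (0:ℝ) τ := by
        constructor
        · positivity
        · have ha : ((m : ℕ) : ℝ) * δ ≤ (⌊t / (δ + 4 * ε)⌋₊ : ℝ) * δ :=
            mul_le_mul_of_nonneg_right hjk hδ.le
          have hb : (⌊t / (δ + 4 * ε)⌋₊ : ℝ) * δ ≤ (⌊t / (δ + 4 * ε)⌋₊ : ℝ) * (δ + 4 * ε) := by
            nlinarith [(by positivity : (0:ℝ) ≤ (⌊t / (δ + 4 * ε)⌋₊:ℝ)), hε.le]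
          have hc : (⌊t / (δ + 4 * ε)⌋₊ : ℝ) * (δ + 4 * ε) ≤ t := floor_mul_le hd2 ht.1
          linarith [ht.2]
      have e1 : ((m + 1 - 1 : ℕ) : ℝ) = (m : ℝ) := by simp
      simp only [seqW, Nat.succ_ne_zero, if_false, e1]
      rw [hPPcongr N1 h1 N2 h2 τ hτ hagree _ hmem]
  -- the strategy
  refine ⟨fun N => if N ∈ OneLip Y then LL N else fun _ => L0, ⟨?_, ?_, ?_⟩, ?_⟩
  · intro N hN; simp only [if_pos hN]; exact hLLlip N hN
  · intro N hN; simp only [if_pos hN]; exact hLL0 N hN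
  · intro N1 h1 N2 h2 τ hτ hagree t ht
    simp only [if_pos h1, if_pos h2]
    exact hLLcongr N1 h1 N2 h2 τ hτ hagree t ht
  · intro N hN
    simp only [if_pos hN]
    apply le_of_forall_pos_le_add
    intro η hη
    have hSne : ((fun t => dist (MM N t) (sX (MM N) t)) '' Set.Icc (0:ℝ) T).Nonempty :=
      ⟨_, ⟨0, ⟨le_refl 0, hT.le⟩, rfl⟩⟩
    have hlt : sInf ((fun t => dist (MM N t) (sX (MM N) t)) '' Set.Icc (0:ℝ) T) < α + η :=
      lt_of_le_of_lt (sXwin (MM N) (hMMlip N hN)) (by linarith)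
    obtain ⟨v, ⟨t0, ht0, rfl⟩, hv⟩ := exists_lt_of_csInf_lt hSne hlt
    have hbdd : BddBelow ((fun t => dist (N t) (LL N t)) '' Set.Icc (0:ℝ) T) := by
      refine ⟨0, ?_⟩
      rintro v ⟨t, ht, rfl⟩
      exact dist_nonneg
    have hmem : dist (N t0) (LL N t0) ∈
        ((fun t => dist (N t) (LL N t)) '' Set.Icc (0:ℝ) T) := ⟨t0, ht0, rfl⟩
    have hinf := csInf_le hbdd hmem
    have hv' : dist (MM N t0) (sX (MM N) t0) < α + η := hv
    have hchain : dist (N t0) (LL N t0) ≤ α + η + (4 * δ + 20 * ε + 6 * T * ε / δ) := by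
      have c1 := hψφ (N t0)
      have c2 := hψ (φ (N t0)) (sX (MM N) t0)
      have c3 := trackB N hN t0 ht0.1 ht0.2
      have c4 := trackA N hN t0 ht0.1 ht0.2
      have t1 := dist_triangle (N t0) (ψ (φ (N t0))) (LL N t0)
      have t2 := dist_triangle (ψ (φ (N t0))) (ψ (sX (MM N) t0)) (LL N t0)
      have t3 := dist_triangle (φ (N t0)) (MM N t0) (sX (MM N) t0)
      have ering : 2 * T * ε / δ + 4 * T * ε / δ = 6 * T * ε / δ := by ring
      linarith
    linarith

end Transfer

lemma hasWin_mono {X : Type*} [MetricSpace X] {α β T : ℝ} (h : α ≤ β)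
    (hw : HasWinningStrategies X α T) : HasWinningStrategies X β T := by
  intro L0
  obtain ⟨s, h1, h2⟩ := hw L0
  exact ⟨s, h1, fun M hM => (h2 M hM).trans h⟩

/-- The error term of the transfer, with `δ = √ε`. -/
noncomputable def errTerm (T ε : ℝ) : ℝ :=
  5 * Real.sqrt ε + 20 * ε + 6 * T * Real.sqrt ε

lemma transfer' {X Y : Type*} [MetricSpace X] [CompactSpace X] [Nonempty X]
    [MetricSpace Y] [CompactSpace Y] [Nonempty Y]
    (hX : IsGeodesicSpace X) (hY : IsGeodesicSpace Y) {α T ε : ℝ} (hT : 0 < T)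
    (hε0 : 0 < ε) (hε : GromovHausdorff.ghDist X Y < ε)
    (hw : HasWinningStrategies X α T) :
    HasWinningStrategies Y (α + errTerm T ε) T := by
  obtain ⟨φ, ψ, h1, h2, h3⟩ := exists_approx_maps X Y hε
  have hs : 0 < Real.sqrt ε := Real.sqrt_pos.mpr hε0
  have key := transfer hX hY hT hε0 hs h1 h2 h3 hw
  have hdiv : 6 * T * ε / Real.sqrt ε = 6 * T * Real.sqrt ε := by
    rw [mul_div_assoc, Real.div_sqrt]
  rw [hdiv] at key
  exact hasWin_mono (by rw [errTerm]) key

lemma errTerm_tendsto {T : ℝ} {e : ℕ → ℝ} (he : Filter.Tendsto e Filter.atTop (nhds 0)) :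
    Filter.Tendsto (fun n => errTerm T (e n)) Filter.atTop (nhds 0) := by
  have hsq : Filter.Tendsto (fun n => Real.sqrt (e n)) Filter.atTop (nhds 0) := by
    have := (Real.continuous_sqrt.tendsto 0).comp he
    simpa [Function.comp_def] using this
  have h5 : Filter.Tendsto (fun n => 5 * Real.sqrt (e n)) Filter.atTop (nhds (5 * 0)) :=
    hsq.const_mul 5
  have h20 : Filter.Tendsto (fun n => 20 * e n) Filter.atTop (nhds (20 * 0)) :=
    he.const_mul 20
  have h6 : Filter.Tendsto (fun n => 6 * T * Real.sqrt (e n)) Filter.atTop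
      (nhds (6 * T * 0)) := hsq.const_mul (6 * T)
  have := (h5.add h20).add h6
  simpa [errTerm] using this

lemma ghDist_comm' (X Y : Type*) [MetricSpace X] [CompactSpace X] [Nonempty X]
    [MetricSpace Y] [CompactSpace Y] [Nonempty Y] :
    GromovHausdorff.ghDist X Y = GromovHausdorff.ghDist Y X := by
  rw [GromovHausdorff.ghDist, GromovHausdorff.ghDist, dist_comm]

end CaptureAux

open CaptureAux

/-- For a sequence of compact geodesic spaces `G n` converging to `X` in the
Gromov–Hausdorff distance, winning strategies in `X` for every radius `> α` exist iff
there are winning strategies in each `G n` with radii converging to `α`. -/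
theorem capture_graph_approximation
    (X : Type*) [MetricSpace X] [CompactSpace X] [Nonempty X]
    (G : ℕ → Type*) [∀ n, MetricSpace (G n)] [∀ n, CompactSpace (G n)]
    [∀ n, Nonempty (G n)]
    (hXGeo : IsGeodesicSpace X) (hGGeo : ∀ n, IsGeodesicSpace (G n))
    (T α : ℝ) (hT : 0 < T) (hα : α ∈ Set.Ioo (0 : ℝ) 1)
    (hconv : Filter.Tendsto (fun n => GromovHausdorff.ghDist X (G n))
      Filter.atTop (nhds 0)) :
    (∀ α' : ℝ, α < α' → HasWinningStrategies X α' T) ↔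
      (∃ a : ℕ → ℝ, (∀ n, HasWinningStrategies (G n) (a n) T) ∧
        Filter.Tendsto a Filter.atTop (nhds α)) := by
  have h1n : ∀ n : ℕ, (0 : ℝ) < 1 / ((n : ℝ) + 1) := by
    intro n; positivity
  have hεpos : ∀ n : ℕ, (0 : ℝ) < GromovHausdorff.ghDist X (G n) + 1 / ((n : ℝ) + 1) := by
    intro n
    have : (0 : ℝ) ≤ GromovHausdorff.ghDist X (G n) := dist_nonneg
    linarith [h1n n]
  have hεlt : ∀ n : ℕ, GromovHausdorff.ghDist X (G n) <
      GromovHausdorff.ghDist X (G n) + 1 / ((n : ℝ) + 1) := by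
    intro n; linarith [h1n n]
  have hinv : Filter.Tendsto (fun n : ℕ => 1 / ((n : ℝ) + 1)) Filter.atTop (nhds 0) :=
    tendsto_one_div_add_atTop_nhds_zero_nat
  have hεconv : Filter.Tendsto
      (fun n : ℕ => GromovHausdorff.ghDist X (G n) + 1 / ((n : ℝ) + 1))
      Filter.atTop (nhds 0) := by
    have := hconv.add hinv
    simpa using this
  have herr := errTerm_tendsto (T := T) hεconv
  constructor
  · intro H
    refine ⟨fun n => (α + 1 / ((n : ℝ) + 1)) +
      errTerm T (GromovHausdorff.ghDist X (G n) + 1 / ((n : ℝ) + 1)), fun n => ?_, ?_⟩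
    · exact transfer' hXGeo (hGGeo n) hT (hεpos n) (hεlt n)
        (H (α + 1 / ((n : ℝ) + 1)) (by linarith [h1n n]))
    · have h1 : Filter.Tendsto (fun n : ℕ => α + 1 / ((n : ℝ) + 1)) Filter.atTop
          (nhds (α + 0)) := (tendsto_const_nhds).add hinv
      have := h1.add herr
      simpa using this
  · rintro ⟨a, hwin, ha⟩ α' hα'
    have hb : Filter.Tendsto
        (fun n => a n + errTerm T (GromovHausdorff.ghDist X (G n) + 1 / ((n : ℝ) + 1)))
        Filter.atTop (nhds (α + 0)) := ha.add herr
    rw [add_zero] at hb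
    have hev : ∀ᶠ n in Filter.atTop,
        a n + errTerm T (GromovHausdorff.ghDist X (G n) + 1 / ((n : ℝ) + 1)) < α' :=
      hb.eventually (Filter.Tendsto.eventually_lt_const hα' Filter.tendsto_id)
    obtain ⟨n, hn⟩ := hev.exists
    have hgd : GromovHausdorff.ghDist (G n) X <
        GromovHausdorff.ghDist X (G n) + 1 / ((n : ℝ) + 1) := by
      rw [ghDist_comm']
      exact hεlt n
    have := transfer' (hGGeo n) hXGeo hT (hεpos n) hgd (hwin n)
    exact hasWin_mono (le_of_lt hn) this
end

section
/- Let (X, ρ) be a compact geodesic metric space, let N ∈ ℕ, β > 0 and δ ≥ 0. If a 1-Lipschitz curve L̂ : [0, Nβ] → X β-pursues a tuple (M̂_i)_{i=0,…,N} of points of X satisfying ρ(M̂_i, M̂_{i+1}) ≤ β(1+δ) for all i = 0,…,N−1, then ρ(L̂(Nβ), M̂_N) ≤ β + Nδβ + ρ(L̂(0), M̂_0). -/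
/-- A curve `L` (defined, in particular, on `[0, Nβ]`) `β`-pursues the tuple
`(M i)_{i = 0, …, N}` of points of `X`. -/
def Pursues {X : Type*} [MetricSpace X] (β : ℝ) (N : ℕ) (L : ℝ → X) (M : ℕ → X) : Prop :=
  ∀ i : ℕ, i < N →
    (β < dist (L ((i : ℝ) * β)) (M i) →
      dist (L ((i : ℝ) * β)) (L (((i : ℝ) + 1) * β)) = β ∧
      dist (L ((i : ℝ) * β)) (L (((i : ℝ) + 1) * β))
          + dist (L (((i : ℝ) + 1) * β)) (M i)
        = dist (L ((i : ℝ) * β)) (M i)) ∧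
    (dist (L ((i : ℝ) * β)) (M i) ≤ β → L (((i : ℝ) + 1) * β) = M i)

/-- If a 1-Lipschitz curve `L` `β`-pursues a tuple `(M i)` whose consecutive
points are at distance at most `β(1 + δ)`, then
`dist (L (Nβ)) (M N) ≤ β + Nδβ + dist (L 0) (M 0)`. -/
theorem pursuit_estimate
    (X : Type*) [MetricSpace X] [CompactSpace X] (hXGeo : IsGeodesicSpace X)
    (N : ℕ) (β δ : ℝ) (hβ : 0 < β) (hδ : 0 ≤ δ)
    (L : ℝ → X) (M : ℕ → X)
    (hLip : LipschitzOnWith 1 L (Set.Icc (0 : ℝ) ((N : ℝ) * β)))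
    (hpur : Pursues β N L M)
    (hM : ∀ i : ℕ, i < N → dist (M i) (M (i + 1)) ≤ β * (1 + δ)) :
    dist (L ((N : ℝ) * β)) (M N) ≤ β + (N : ℝ) * δ * β + dist (L 0) (M 0) := by
  have key : ∀ i : ℕ, i ≤ N →
      dist (L ((i : ℝ) * β)) (M i) ≤ β + (i : ℝ) * δ * β + dist (L 0) (M 0) := by
    intro i
    induction i with
    | zero =>
      intro _
      simp only [Nat.cast_zero, zero_mul]
      linarith
    | succ i ih =>
      intro h
      have hi : i < N := h
      obtain ⟨h1, h2⟩ := hpur i hi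
      have hMi := hM i hi
      have ihv := ih hi.le
      have h0 : (0:ℝ) ≤ dist (L 0) (M 0) := dist_nonneg
      have htri : dist (L (((i : ℝ) + 1) * β)) (M (i + 1)) ≤
          dist (L (((i : ℝ) + 1) * β)) (M i) + dist (M i) (M (i + 1)) :=
        dist_triangle _ _ _
      have goal' : dist (L (((i : ℝ) + 1) * β)) (M (i + 1)) ≤
          β + ((i : ℝ) + 1) * δ * β + dist (L 0) (M 0) := by
        by_cases hc : dist (L ((i : ℝ) * β)) (M i) ≤ β
        · rw [h2 hc]
          have hcast : (0:ℝ) ≤ (i:ℝ) := Nat.cast_nonneg i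
          nlinarith [mul_nonneg (mul_nonneg hcast hδ) hβ.le]
        · obtain ⟨hb, hsum⟩ := h1 (not_le.mp hc)
          have hcast : (0:ℝ) ≤ (i:ℝ) := Nat.cast_nonneg i
          nlinarith [mul_nonneg (mul_nonneg hcast hδ) hβ.le]
      push_cast
      exact goal'
  exact key N le_rfl
end

section
/- Let (X, ρ) be a compact geodesic metric space, let N ∈ ℕ, β > 0, and L₀ ∈ X. Suppose that for each i = 0,…,N a map M̂_i : 1Lip(X) → X is given such that M̂_i(M) depends only on the restriction of M to [0, iβ] (i.e., if M₁(t) = M₂(t) for all t ∈ [0, iβ] then M̂_i(M₁) = M̂_i(M₂)). Then there exists a β-stepwise strategy s_{L₀} : 1Lip(X) → 1Lip(X) with s_{L₀}(M)(0) = L₀ such that for every M ∈ 1Lip(X) the restriction of s_{L₀}(M) to [0, Nβ] β-pursues the tuple (M̂_i(M))_{i=0,…,N}. -/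
/-- A `β`-stepwise strategy with initial position `L0`. -/
def IsStepwiseStrategy {X : Type*} [MetricSpace X] (β : ℝ) (L0 : X)
    (s : (ℝ → X) → (ℝ → X)) : Prop :=
  (∀ M ∈ OneLip X, s M ∈ OneLip X) ∧
  (∀ M ∈ OneLip X, s M 0 = L0) ∧
  (∀ M1 ∈ OneLip X, ∀ M2 ∈ OneLip X, ∀ n : ℕ,
    (∀ t ∈ Set.Icc (0 : ℝ) ((n : ℝ) * β), M1 t = M2 t) →
    ∀ t ∈ Set.Icc (0 : ℝ) (((n : ℝ) + 1) * β), s M1 t = s M2 t)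

/-- If each target point `Mh i M` depends only on the restriction of `M`
to `[0, iβ]`, then the pursuer has a `β`-stepwise strategy whose trajectory `β`-pursues
the tuple `(Mh i M)_{i = 0, …, N}`. -/
theorem stepwise_pursuit_strategy
    (X : Type*) [MetricSpace X] [CompactSpace X] (hXGeo : IsGeodesicSpace X)
    (N : ℕ) (β : ℝ) (hβ : 0 < β) (L0 : X)
    (Mh : ℕ → (ℝ → X) → X)
    (hdep : ∀ i : ℕ, i ≤ N → ∀ M1 ∈ OneLip X, ∀ M2 ∈ OneLip X,
      (∀ t ∈ Set.Icc (0 : ℝ) ((i : ℝ) * β), M1 t = M2 t) → Mh i M1 = Mh i M2) :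
    ∃ s : (ℝ → X) → (ℝ → X), IsStepwiseStrategy β L0 s ∧
      ∀ M ∈ OneLip X, Pursues β N (s M) (fun i => Mh i M) := by
  classical
  choose l hl0 g hg0 hgl hgd using hXGeo
  have hlen : ∀ x y : X, l x y = dist x y := by
    intro x y
    have h := hgd x y 0 ⟨le_refl 0, hl0 x y⟩ (l x y) ⟨hl0 x y, le_refl _⟩
    rw [hg0, hgl, abs_sub_comm, sub_zero, abs_of_nonneg (hl0 x y)] at h
    exact h.symm
  set q : X → X → ℝ → X := fun x y t => g x y (min (max t 0) (l x y)) with hq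
  have hmem : ∀ (x y : X) (t : ℝ), min (max t 0) (l x y) ∈ Set.Icc 0 (l x y) :=
    fun x y t => ⟨le_min (le_max_right _ _) (hl0 x y), min_le_right _ _⟩
  have hqdist : ∀ x y t t', dist (q x y t) (q x y t') ≤ |t - t'| := by
    intro x y t t'
    simp only [hq]
    rw [hgd x y _ (hmem x y t) _ (hmem x y t')]
    calc |min (max t 0) (l x y) - min (max t' 0) (l x y)| ≤ |max t 0 - max t' 0| := by
          simpa using abs_min_sub_min_le_max (max t 0) (l x y) (max t' 0) (l x y)
      _ ≤ |t - t'| := by simpa using abs_max_sub_max_le_max t 0 t' 0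
  have hq0 : ∀ x y, q x y 0 = x := by
    intro x y
    simp only [hq, max_self, min_eq_left (hl0 x y)]
    simpa using hg0 x y
  have hqend : ∀ x y t, l x y ≤ t → q x y t = y := by
    intro x y t ht
    have h1 : min (max t 0) (l x y) = l x y :=
      min_eq_right (le_trans ht (le_max_left _ _))
    simp only [hq, h1]
    exact hgl x y
  have hqβ : ∀ x y, β ≤ l x y → q x y β = g x y β := by
    intro x y h
    simp only [hq, max_eq_left hβ.le, min_eq_left h]
  set nxt : X → X → X := fun x y => if dist x y ≤ β then y else q x y β with hnxt
  have hdnxt : ∀ x y, dist x (nxt x y) ≤ β := by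
    intro x y
    by_cases h : dist x y ≤ β
    · simp [hnxt, h]
    · simp only [hnxt, if_neg h]
      calc dist x (q x y β) = dist (q x y 0) (q x y β) := by rw [hq0]
        _ ≤ |0 - β| := hqdist x y 0 β
        _ = β := by rw [abs_of_nonpos (by linarith)]; ring
  have hnxt_far : ∀ x y, β < dist x y →
      dist x (nxt x y) = β ∧ dist x (nxt x y) + dist (nxt x y) y = dist x y := by
    intro x y h
    have hβl : β ≤ l x y := by rw [hlen]; exact h.le
    have hd1 : dist x (nxt x y) = β := by
      simp only [hnxt, if_neg (not_le.mpr h)]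
      rw [hqβ x y hβl]
      calc dist x (g x y β) = dist (g x y 0) (g x y β) := by rw [hg0]
        _ = |0 - β| := hgd x y 0 ⟨le_rfl, hl0 x y⟩ β ⟨hβ.le, hβl⟩
        _ = β := by rw [abs_of_nonpos (by linarith)]; ring
    refine ⟨hd1, ?_⟩
    have hd2 : dist (nxt x y) y = l x y - β := by
      simp only [hnxt, if_neg (not_le.mpr h)]
      rw [hqβ x y hβl]
      calc dist (g x y β) y = dist (g x y β) (g x y (l x y)) := by rw [hgl]
        _ = |β - l x y| := hgd x y β ⟨hβ.le, hβl⟩ (l x y) ⟨hl0 x y, le_rfl⟩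
        _ = l x y - β := by rw [abs_of_nonpos (by linarith)]; ring
    rw [hd1, hd2, ← hlen x y]; ring
  set P : (ℝ → X) → ℕ → X := fun M i =>
    Nat.rec L0 (fun j p => if j < N then nxt p (Mh j M) else p) i with hP
  have hP0 : ∀ M, P M 0 = L0 := fun M => rfl
  have hPs : ∀ M i, P M (i + 1) = if i < N then nxt (P M i) (Mh i M) else P M i :=
    fun M i => rfl
  have hPd : ∀ M i, dist (P M i) (P M (i + 1)) ≤ β := by
    intro M i
    rw [hPs]
    split
    · exact hdnxt _ _
    · simp [hβ.le]
  set s : (ℝ → X) → ℝ → X := fun M t =>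
    q (P M ⌊t / β⌋₊) (P M (⌊t / β⌋₊ + 1)) (t - ⌊t / β⌋₊ * β) with hs
  have hfl : ∀ i : ℕ, ⌊((i : ℝ) * β) / β⌋₊ = i := by
    intro i
    rw [mul_div_cancel_right₀ _ (ne_of_gt hβ), Nat.floor_natCast]
  have hfloor_le : ∀ t : ℝ, 0 ≤ t → (⌊t / β⌋₊ : ℝ) * β ≤ t := by
    intro t ht
    have h1 : (⌊t / β⌋₊ : ℝ) ≤ t / β := Nat.floor_le (div_nonneg ht hβ.le)
    calc (⌊t / β⌋₊ : ℝ) * β ≤ (t / β) * β := mul_le_mul_of_nonneg_right h1 hβ.le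
      _ = t := div_mul_cancel₀ _ (ne_of_gt hβ)
  have hfloor_lt : ∀ t : ℝ, t < ((⌊t / β⌋₊ : ℝ) + 1) * β := by
    intro t
    have h1 : t / β < (⌊t / β⌋₊ : ℝ) + 1 := Nat.lt_floor_add_one (t / β)
    exact (div_lt_iff₀ hβ).mp h1
  have hpiece : ∀ M (i : ℕ) t, (i : ℝ) * β ≤ t → t ≤ ((i : ℝ) + 1) * β →
      s M t = q (P M i) (P M (i + 1)) (t - (i : ℝ) * β) := by
    intro M i t h1 h2
    rcases lt_or_eq_of_le h2 with h2 | h2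
    · have ht0 : (0 : ℝ) ≤ t := le_trans (by positivity) h1
      have hi : ⌊t / β⌋₊ = i := by
        rw [Nat.floor_eq_iff (div_nonneg ht0 hβ.le)]
        constructor
        · exact (le_div_iff₀ hβ).mpr h1
        · exact (div_lt_iff₀ hβ).mpr h2
      simp only [hs, hi]
    · have hi : ⌊t / β⌋₊ = i + 1 := by
        rw [h2, show ((i : ℝ) + 1) * β = ((i + 1 : ℕ) : ℝ) * β by push_cast; ring]
        exact hfl (i + 1)
      have hL : s M t = P M (i + 1) := by
        simp only [hs, hi]
        rw [show t - ((i + 1 : ℕ) : ℝ) * β = 0 by push_cast; rw [h2]; ring]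
        exact hq0 _ _
      have hR : q (P M i) (P M (i + 1)) (t - (i : ℝ) * β) = P M (i + 1) := by
        apply hqend
        rw [hlen]
        calc dist (P M i) (P M (i + 1)) ≤ β := hPd M i
          _ ≤ t - (i : ℝ) * β := by rw [h2]; ring_nf; linarith
      rw [hL, hR]
  have hsgrid : ∀ M (i : ℕ), s M ((i : ℝ) * β) = P M i := by
    intro M i
    simp only [hs, hfl i]
    rw [show (i : ℝ) * β - (i : ℝ) * β = 0 by ring]
    exact hq0 _ _
  have hA : ∀ M (i : ℕ) t t', (i : ℝ) * β ≤ t → t ≤ t' → t' ≤ ((i : ℝ) + 1) * β →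
      dist (s M t) (s M t') ≤ t' - t := by
    intro M i t t' h1 h2 h3
    rw [hpiece M i t h1 (le_trans h2 h3), hpiece M i t' (le_trans h1 h2) h3]
    calc dist _ _ ≤ |(t - (i : ℝ) * β) - (t' - (i : ℝ) * β)| := hqdist _ _ _ _
      _ = t' - t := by rw [abs_of_nonpos (by linarith)]; ring
  have hB : ∀ M (i j : ℕ), i ≤ j → ∀ t t', (i : ℝ) * β ≤ t → t ≤ ((i : ℝ) + 1) * β →
      (j : ℝ) * β ≤ t' → t' ≤ ((j : ℝ) + 1) * β → t ≤ t' →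
      dist (s M t) (s M t') ≤ t' - t := by
    intro M i j hij
    induction j, hij using Nat.le_induction with
    | base => intro t t' h1 h2 h3 h4 h5; exact hA M i t t' h1 h5 h4
    | succ j hij IH =>
      intro t t' h1 h2 h3 h4 h5
      have hij' : (i : ℝ) ≤ (j : ℝ) := by exact_mod_cast hij
      push_cast at h3 h4
      have ht : t ≤ ((j : ℝ) + 1) * β := le_trans h2 (by nlinarith)
      have key1 : dist (s M t) (s M (((j : ℝ) + 1) * β)) ≤ ((j : ℝ) + 1) * β - t :=
        IH t (((j : ℝ) + 1) * β) h1 h2 (by nlinarith) le_rfl ht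
      have key2 : dist (s M (((j : ℝ) + 1) * β)) (s M t') ≤ t' - ((j : ℝ) + 1) * β := by
        have := hA M (j + 1) (((j : ℝ) + 1) * β) t' (by push_cast; linarith)
          (by push_cast; linarith) (by push_cast; linarith)
        simpa using this
      calc dist (s M t) (s M t') ≤ dist (s M t) (s M (((j : ℝ) + 1) * β))
            + dist (s M (((j : ℝ) + 1) * β)) (s M t') := dist_triangle _ _ _
        _ ≤ t' - t := by linarith
  have hlipgen : ∀ M t t', 0 ≤ t → t ≤ t' → dist (s M t) (s M t') ≤ t' - t := by
    intro M t t' ht h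
    have ht' : (0 : ℝ) ≤ t' := le_trans ht h
    apply hB M ⌊t / β⌋₊ ⌊t' / β⌋₊
      (Nat.floor_le_floor (div_le_div_of_nonneg_right h hβ.le))
      t t' (hfloor_le t ht) (hfloor_lt t).le (hfloor_le t' ht') (hfloor_lt t').le h
  have hlip : ∀ M, s M ∈ OneLip X := by
    intro M
    rw [OneLip, Set.mem_setOf_eq, lipschitzOnWith_iff_dist_le_mul]
    intro x hx y hy
    rcases le_total x y with h | h
    · have := hlipgen M x y hx h
      simp only [NNReal.coe_one, one_mul, Real.dist_eq]
      rw [abs_of_nonpos (by linarith)]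
      linarith
    · have := hlipgen M y x hy h
      rw [dist_comm (s M x)]
      simp only [NNReal.coe_one, one_mul, Real.dist_eq]
      rw [abs_of_nonneg (by linarith)]
      linarith
  have hPagree : ∀ M1, M1 ∈ OneLip X → ∀ M2, M2 ∈ OneLip X → ∀ n : ℕ,
      (∀ t ∈ Set.Icc (0 : ℝ) ((n : ℝ) * β), M1 t = M2 t) →
      ∀ i ≤ n + 1, P M1 i = P M2 i := by
    intro M1 h1 M2 h2 n hag i hi
    induction i with
    | zero => rfl
    | succ i IH =>
      have hi' : i ≤ n := Nat.lt_succ_iff.mp hi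
      rw [hPs, hPs, IH (le_trans hi' (Nat.le_succ n))]
      by_cases hiN : i < N
      · rw [if_pos hiN, if_pos hiN, hdep i hiN.le M1 h1 M2 h2 ?_]
        intro t ht
        refine hag t ⟨ht.1, le_trans ht.2 ?_⟩
        have : (i : ℝ) ≤ (n : ℝ) := by exact_mod_cast hi'
        nlinarith
      · rw [if_neg hiN, if_neg hiN]
  refine ⟨s, ⟨fun M _ => hlip M, ?_, ?_⟩, ?_⟩
  · intro M _
    have := hsgrid M 0
    simpa [hP0] using this
  · intro M1 h1 M2 h2 n hag t ht
    have ht0 : (0 : ℝ) ≤ t := ht.1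
    have htn : t ≤ ((n : ℝ) + 1) * β := ht.2
    have hfn : ⌊t / β⌋₊ ≤ n + 1 := by
      have h1' : t / β ≤ ((n + 1 : ℕ) : ℝ) := by
        rw [div_le_iff₀ hβ]; push_cast; linarith
      calc ⌊t / β⌋₊ ≤ ⌊((n + 1 : ℕ) : ℝ)⌋₊ := Nat.floor_le_floor h1'
        _ = n + 1 := Nat.floor_natCast _
    rcases lt_or_eq_of_le hfn with hlt | heq
    · have hle : ⌊t / β⌋₊ ≤ n := Nat.lt_succ_iff.mp hlt
      simp only [hs]
      rw [hPagree M1 h1 M2 h2 n hag ⌊t / β⌋₊ (le_trans hle (Nat.le_succ n)),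
        hPagree M1 h1 M2 h2 n hag (⌊t / β⌋₊ + 1) (Nat.succ_le_succ hle)]
    · have hge : ((n : ℝ) + 1) * β ≤ t := by
        have := hfloor_le t ht0
        rw [heq] at this
        push_cast at this
        linarith
      have hteq : t = ((n + 1 : ℕ) : ℝ) * β := by push_cast; linarith
      rw [hteq, hsgrid M1 (n + 1), hsgrid M2 (n + 1),
        hPagree M1 h1 M2 h2 n hag (n + 1) le_rfl]
  · intro M hM i hiN
    have e1 : s M ((i : ℝ) * β) = P M i := hsgrid M i
    have e2 : s M (((i : ℝ) + 1) * β) = P M (i + 1) := by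
      have := hsgrid M (i + 1)
      push_cast at this
      exact this
    refine ⟨?_, ?_⟩
    · intro hlt
      rw [e1, e2, hPs, if_pos hiN]
      rw [e1] at hlt
      by_cases h : dist (P M i) (Mh i M) ≤ β
      · exact absurd hlt (not_lt.mpr h)
      · exact hnxt_far (P M i) (Mh i M) hlt
    · intro hle
      rw [e1] at hle
      rw [e2, hPs, if_pos hiN]
      simp only [hnxt]
      exact if_pos hle
end

section
/- If a pair (f, f̃) is a 4ε-chaining between compact metric spaces X and X̃ (with ε > 0), then dis f ≤ 10ε and dis f̃ ≤ 10ε. -/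
/-- The pair `(f, ft)` is an `ε`-chaining between `X` and `Xt`. -/
def IsChaining {X Xt : Type*} [MetricSpace X] [MetricSpace Xt]
    (ε : ℝ) (f : Xt → X) (ft : X → Xt) : Prop :=
  ∃ (RX : Set X) (RXt : Set Xt) (h : Xt → X) (ht : X → Xt)
    (g : X → X) (gt : Xt → Xt),
    RX.Finite ∧ RXt.Finite ∧
    (∀ x : X, ∃ y ∈ RX, dist x y ≤ ε) ∧
    (∀ xt : Xt, ∃ yt ∈ RXt, dist xt yt ≤ ε) ∧
    Set.BijOn h RXt RX ∧
    Set.MapsTo ht RX RXt ∧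
    (∀ y ∈ RXt, ht (h y) = y) ∧
    (∀ x ∈ RX, h (ht x) = x) ∧
    (∀ y1 ∈ RXt, ∀ y2 ∈ RXt, |dist y1 y2 - dist (h y1) (h y2)| ≤ ε / 2) ∧
    (∀ x1 ∈ RX, ∀ x2 ∈ RX, |dist x1 x2 - dist (ht x1) (ht x2)| ≤ ε / 2) ∧
    (∀ x : X, g x ∈ RX ∧ ∀ y ∈ RX, dist x (g x) ≤ dist x y) ∧
    (∀ xt : Xt, gt xt ∈ RXt ∧ ∀ yt ∈ RXt, dist xt (gt xt) ≤ dist xt yt) ∧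
    (∀ xt : Xt, f xt = h (gt xt)) ∧
    (∀ x : X, ft x = ht (g x))

lemma abs_dist_sub_dist_le {Z : Type*} [MetricSpace Z] (a b c d : Z) :
    |dist a b - dist c d| ≤ dist a c + dist b d := by
  rw [abs_sub_le_iff]
  constructor
  · have h1 := dist_triangle a c b
    have h2 := dist_triangle c d b
    have h3 := dist_triangle4 a c d b
    rw [dist_comm d b] at h3
    linarith
  · have h3 := dist_triangle4 c a b d
    rw [dist_comm c a] at h3
    linarith [dist_comm b d]

/-- If `(f, ft)` is a `4ε`-chaining between compact metric spaces `X` and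
`X̃`, then `dis f ≤ 10ε` and `dis f̃ ≤ 10ε`. -/
theorem chaining_distortion
    (X Xt : Type*) [MetricSpace X] [CompactSpace X]
    [MetricSpace Xt] [CompactSpace Xt]
    (ε : ℝ) (hε : 0 < ε) (f : Xt → X) (ft : X → Xt)
    (hch : IsChaining (4 * ε) f ft) :
    (∀ xt1 xt2 : Xt, |dist xt1 xt2 - dist (f xt1) (f xt2)| ≤ 10 * ε) ∧
    (∀ x1 x2 : X, |dist x1 x2 - dist (ft x1) (ft x2)| ≤ 10 * ε) := by
  obtain ⟨RX, RXt, h, ht, g, gt, _, _, hnetX, hnetXt, _, _, _, _, hdish, hdisht,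
    hg, hgt, hf, hft⟩ := hch
  have hgclose : ∀ x : X, dist x (g x) ≤ 4 * ε := by
    intro x
    obtain ⟨y, hy, hyd⟩ := hnetX x
    exact le_trans ((hg x).2 y hy) hyd
  have hgtclose : ∀ xt : Xt, dist xt (gt xt) ≤ 4 * ε := by
    intro xt
    obtain ⟨y, hy, hyd⟩ := hnetXt xt
    exact le_trans ((hgt xt).2 y hy) hyd
  constructor
  · intro a b
    rw [hf a, hf b]
    have h1 := abs_dist_sub_dist_le a b (gt a) (gt b)
    have h2 := hdish (gt a) (hgt a).1 (gt b) (hgt b).1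
    have h3 := hgtclose a
    have h4 := hgtclose b
    have := abs_sub_le (dist a b) (dist (gt a) (gt b)) (dist (h (gt a)) (h (gt b)))
    rw [abs_le] at *
    constructor <;> linarith [h1.1, h1.2, h2.1, h2.2]
  · intro a b
    rw [hft a, hft b]
    have h1 := abs_dist_sub_dist_le a b (g a) (g b)
    have h2 := hdisht (g a) (hg a).1 (g b) (hg b).1
    have h3 := hgclose a
    have h4 := hgclose b
    rw [abs_le] at *
    constructor <;> linarith [h1.1, h1.2, h2.1, h2.2]
end

section
/- If a pair (f, f̃) is a 4ε-chaining between compact metric spaces X and X̃ (with ε > 0), then ρ̃(f̃(f(x̃)), x̃) ≤ 4ε holds for every x̃ ∈ X̃. -/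
/-- If `(f, ft)` is a `4ε`-chaining between compact metric spaces `X` and
`X̃`, then `ρ̃(f̃(f(x̃)), x̃) ≤ 4ε` for every `x̃ ∈ X̃`. -/
theorem chaining_almost_inverse
    (X Xt : Type*) [MetricSpace X] [CompactSpace X]
    [MetricSpace Xt] [CompactSpace Xt]
    (ε : ℝ) (hε : 0 < ε) (f : Xt → X) (ft : X → Xt)
    (hch : IsChaining (4 * ε) f ft) :
    ∀ xt : Xt, dist (ft (f xt)) xt ≤ 4 * ε := by
  obtain ⟨RX, RXt, h, ht, g, gt, _, _, _, hnetXt, hbij, _, hhth, _, _, _, hg, hgt, hf, hft⟩ := hch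
  intro xt
  obtain ⟨ygt, hygt⟩ := hgt xt
  have hfx : f xt ∈ RX := by rw [hf]; exact hbij.mapsTo ygt
  have hgfx : g (f xt) = f xt := by
    obtain ⟨hmem, hmin⟩ := hg (f xt)
    have := hmin (f xt) hfx
    simp at this
    exact this.symm
  have key : ft (f xt) = gt xt := by
    rw [hft, hgfx, hf, hhth _ ygt]
  rw [key]
  obtain ⟨yt, hytmem, hyt⟩ := hnetXt xt
  calc dist (gt xt) xt = dist xt (gt xt) := dist_comm _ _
    _ ≤ dist xt yt := hygt yt hytmem
    _ ≤ 4 * ε := hyt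
end

section
/- Let (X, ρ) and (X̃, ρ̃) be metric spaces, ε > 0, let ĥ : X → X̃ be a map with distortion dis ĥ ≤ 2ε, let R_X̃ ⊆ ĥ[X] be a 2ε-net of X̃, and let R_X ⊆ X be a set obtained by choosing for each y ∈ R_X̃ exactly one point x_y ∈ X with ĥ(x_y) = y. Then R_X is a 4ε-net of X. -/
/-- If `ĥ : X → X̃` has distortion at most `2ε`, `R_X̃ ⊆ ĥ[X]` is a
`2ε`-net of `X̃`, and `R_X` consists of one chosen `ĥ`-preimage of each point of `R_X̃`,
then `R_X` is a `4ε`-net of `X`. -/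
theorem preimage_net
    (X Xt : Type*) [MetricSpace X] [MetricSpace Xt]
    (ε : ℝ) (hε : 0 < ε) (hh : X → Xt)
    (hdis : ∀ x1 x2 : X, |dist x1 x2 - dist (hh x1) (hh x2)| ≤ 2 * ε)
    (RXt : Set Xt) (hsub : RXt ⊆ Set.range hh)
    (hnet : ∀ xt : Xt, ∃ yt ∈ RXt, dist xt yt ≤ 2 * ε)
    (sel : Xt → X) (hsel : ∀ y ∈ RXt, hh (sel y) = y) :
    ∀ x : X, ∃ z ∈ sel '' RXt, dist x z ≤ 4 * ε := by
  intro x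
  obtain ⟨yt, hyt, hd⟩ := hnet (hh x)
  refine ⟨sel yt, ⟨yt, hyt, rfl⟩, ?_⟩
  have h1 := hdis x (sel yt)
  rw [hsel yt hyt] at h1
  have := abs_le.mp h1
  linarith [this.2]
end
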